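/- arXiv:1908.10457 — 6 statements merged into one kernel-verified Lean document; each statement's English description precedes it below -/
import Mathlib

section
/- For all positive integers t and r, the immersion number of the Cartesian product K_t□K_r equals t + r − 1. -/
set_option linter.unusedVariables false

open SimpleGraph

/-- A graph `G` has a `K_t`-immersion: `t` terminal vertices (injective `φ`) together with
pairwise edge-disjoint paths joining every pair of terminals. -/
def HasCliqueImmersion {V : Type*} (G : SimpleGraph V) (t : ℕ) : Prop :=
  ∃ φ : Fin t → V, Function.Injective φ ∧
    ∃ P : ∀ i j : Fin t, G.Walk (φ i) (φ j),
      (∀ i j : Fin t, i < j → (P i j).IsPath) ∧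
      (∀ i j k l : Fin t, i < j → k < l → (i, j) ≠ (k, l) →
        List.Disjoint (P i j).edges (P k l).edges)

/-- The immersion number of `G`: the largest `t` such that `G` has a `K_t`-immersion. -/
noncomputable def immersionNumber {V : Type*} (G : SimpleGraph V) : ℕ :=
  sSup {t | HasCliqueImmersion G t}

/-- Lexicographic product. -/
def lexProd {α β : Type*} (G : SimpleGraph α) (H : SimpleGraph β) :
    SimpleGraph (α × β) where
  Adj x y := G.Adj x.1 y.1 ∨ (x.1 = y.1 ∧ H.Adj x.2 y.2)
  symm := by constructor; rintro x y (h | ⟨h1, h2⟩); exact Or.inl h.symm; exact Or.inr ⟨h1.symm, h2.symm⟩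
  loopless := by constructor; rintro x (h | ⟨-, h⟩) <;> exact h.ne rfl

/-- Direct (tensor) product. -/
def directProd {α β : Type*} (G : SimpleGraph α) (H : SimpleGraph β) :
    SimpleGraph (α × β) where
  Adj x y := G.Adj x.1 y.1 ∧ H.Adj x.2 y.2
  symm := by constructor; rintro x y ⟨h1, h2⟩; exact ⟨h1.symm, h2.symm⟩
  loopless := by constructor; rintro x ⟨h, -⟩; exact h.ne rfl

/-- Strong product. -/
def strongProd {α β : Type*} (G : SimpleGraph α) (H : SimpleGraph β) :
    SimpleGraph (α × β) :=
  (G.boxProd H) ⊔ (directProd G H)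

/-- Cartesian power: `d`-fold Cartesian (box) product of `G` with itself. -/
def boxPow {α : Type*} (G : SimpleGraph α) (d : ℕ) : SimpleGraph (Fin d → α) where
  Adj x y := ∃ i, G.Adj (x i) (y i) ∧ ∀ j, j ≠ i → x j = y j
  symm := by constructor; rintro x y ⟨i, h, hj⟩; exact ⟨i, h.symm, fun j hji => (hj j hji).symm⟩
  loopless := by constructor; rintro x ⟨i, h, -⟩; exact h.ne rfl

instance {α β : Type*} [DecidableEq α] (G : SimpleGraph α) (H : SimpleGraph β)
    [DecidableRel G.Adj] [DecidableRel H.Adj] : DecidableRel (lexProd G H).Adj :=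
  fun x y => inferInstanceAs (Decidable (_ ∨ _))

instance {α β : Type*} (G : SimpleGraph α) (H : SimpleGraph β)
    [DecidableRel G.Adj] [DecidableRel H.Adj] : DecidableRel (directProd G H).Adj :=
  fun x y => inferInstanceAs (Decidable (_ ∧ _))

instance {α β : Type*} [DecidableEq α] [DecidableEq β] (G : SimpleGraph α) (H : SimpleGraph β)
    [DecidableRel G.Adj] [DecidableRel H.Adj] : DecidableRel (G.boxProd H).Adj :=
  fun x y => decidable_of_iff _ (SimpleGraph.boxProd_adj).symm

instance {α β : Type*} [DecidableEq α] [DecidableEq β] (G : SimpleGraph α) (H : SimpleGraph β)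
    [DecidableRel G.Adj] [DecidableRel H.Adj] : DecidableRel (strongProd G H).Adj :=
  fun x y => inferInstanceAs (Decidable (_ ∨ _))


section ImmersionAux

variable {t r : ℕ}

variable {t r : ℕ}

abbrev G2 (t r : ℕ) : SimpleGraph (Fin t × Fin r) := (⊤ : SimpleGraph (Fin t)).boxProd ⊤

def rowW (a : Fin t) (b d : Fin r) : (G2 t r).Walk (a, b) (a, d) :=
  if h : b = d then (Walk.nil).copy rfl (by rw [h])
  else Walk.cons (by simp [h]) Walk.nil

def colW (b : Fin r) (a c : Fin t) : (G2 t r).Walk (a, b) (c, b) :=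
  if h : a = c then (Walk.nil).copy rfl (by rw [h])
  else Walk.cons (by simp [h]) Walk.nil

def W : (u v : Fin t × Fin r) → (G2 t r).Walk u v
  | (a, b), (c, d) => (rowW a b d).append (colW d a c)

lemma edges_rowW (a : Fin t) (b d : Fin r) :
    (rowW a b d).edges = if b = d then [] else [s((a,b),(a,d))] := by
  unfold rowW; split_ifs <;> simp

lemma edges_colW (b : Fin r) (a c : Fin t) :
    (colW b a c).edges = if a = c then [] else [s((a,b),(c,b))] := by
  unfold colW; split_ifs <;> simp

lemma edges_W (u v : Fin t × Fin r) :
    (W u v).edges = (if u.2 = v.2 then [] else [s((u.1,u.2),(u.1,v.2))])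
      ++ (if u.1 = v.1 then [] else [s((u.1,v.2),(v.1,v.2))]) := by
  obtain ⟨a, b⟩ := u; obtain ⟨c, d⟩ := v
  simp [W, Walk.edges_append, edges_rowW, edges_colW]

lemma isPath_W (u v : Fin t × Fin r) (huv : u ≠ v) : (W u v).IsPath := by
  obtain ⟨a, b⟩ := u; obtain ⟨c, d⟩ := v
  show ((rowW a b d).append (colW d a c)).IsPath
  unfold rowW colW
  split_ifs with h1 h2 h2
  · exact absurd (Prod.ext h2 h1) huv
  · subst h1; simp [Walk.cons_isPath_iff, h2, Prod.ext_iff]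
  · subst h2; simp [Walk.cons_isPath_iff, h1, Prod.ext_iff]
  · simp [Walk.cons_isPath_iff, Walk.support_append, h1, h2, Prod.ext_iff]

def phi (t r : ℕ) (ht : 1 ≤ t) (hr : 1 ≤ r) (m : Fin (t + r - 1)) : Fin t × Fin r :=
  if h : (m : ℕ) < t then (⟨m, h⟩, ⟨0, hr⟩)
  else (⟨0, ht⟩, ⟨(m : ℕ) - t + 1, by have := m.isLt; omega⟩)

lemma phi_fst (t r : ℕ) (ht : 1 ≤ t) (hr : 1 ≤ r) (m : Fin (t + r - 1)) :
    ((phi t r ht hr m).1 : ℕ) = if (m : ℕ) < t then (m : ℕ) else 0 := by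
  unfold phi; split_ifs <;> rfl

lemma phi_snd (t r : ℕ) (ht : 1 ≤ t) (hr : 1 ≤ r) (m : Fin (t + r - 1)) :
    ((phi t r ht hr m).2 : ℕ) = if (m : ℕ) < t then 0 else (m : ℕ) - t + 1 := by
  unfold phi; split_ifs <;> rfl

lemma phi_inj (t r : ℕ) (ht : 1 ≤ t) (hr : 1 ≤ r) :
    Function.Injective (phi t r ht hr) := by
  intro a b hab
  rw [Prod.ext_iff] at hab
  obtain ⟨h1, h2⟩ := hab
  have e1 := congrArg Fin.val h1
  have e2 := congrArg Fin.val h2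
  rw [phi_fst, phi_fst] at e1
  rw [phi_snd, phi_snd] at e2
  have ha := a.isLt; have hb := b.isLt
  apply Fin.ext
  split_ifs at e1 e2 <;> omega

lemma mem_edges_W (u v : Fin t × Fin r) (e : Sym2 (Fin t × Fin r)) :
    e ∈ (W u v).edges ↔ (u.2 ≠ v.2 ∧ e = s((u.1,u.2),(u.1,v.2)))
      ∨ (u.1 ≠ v.1 ∧ e = s((u.1,v.2),(v.1,v.2))) := by
  rw [edges_W]
  split_ifs <;> simp [*]

lemma disjoint_W (t r : ℕ) (ht : 1 ≤ t) (hr : 1 ≤ r) (i j k l : Fin (t + r - 1))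
    (hij : i < j) (hkl : k < l) (hne : (i, j) ≠ (k, l)) :
    List.Disjoint (W (phi t r ht hr i) (phi t r ht hr j)).edges
      (W (phi t r ht hr k) (phi t r ht hr l)).edges := by
  intro e he1 he2
  rw [mem_edges_W] at he1 he2
  have hi := i.isLt; have hj := j.isLt; have hk := k.isLt; have hl := l.isLt
  have hij' : (i : ℕ) < (j : ℕ) := hij
  have hkl' : (k : ℕ) < (l : ℕ) := hkl
  have hne' : (i : ℕ) ≠ (k : ℕ) ∨ (j : ℕ) ≠ (l : ℕ) := by
    by_contra h
    push_neg at h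
    exact hne (by rw [Prod.ext_iff]; exact ⟨Fin.ext h.1, Fin.ext h.2⟩)
  rcases he1 with ⟨hA, rfl⟩ | ⟨hA, rfl⟩ <;> rcases he2 with ⟨hB, eq⟩ | ⟨hB, eq⟩ <;>
    simp only [Sym2.eq_iff, Prod.mk.injEq, ne_eq, ← Fin.val_eq_val, phi_fst, phi_snd]
      at eq hA hB <;>
    split_ifs at eq hA hB <;> rcases eq with eq | eq <;> (try simp only [false_and, and_false, true_and, and_true, eq_self_iff_true] at eq) <;> omega

lemma first_edge_mem {V : Type*} {G : SimpleGraph V} {u v : V} (p : G.Walk u v)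
    (hp : ¬ p.Nil) : s(u, p.getVert 1) ∈ p.edges := by
  have h2 := congrArg SimpleGraph.Walk.edges (p.cons_tail_eq hp)
  rw [SimpleGraph.Walk.edges_cons] at h2
  rw [← h2]
  exact List.mem_cons_self

lemma upper (t r n : ℕ) (ht : 1 ≤ t) (hr : 1 ≤ r)
    (h : HasCliqueImmersion (G2 t r) n) : n ≤ t + r - 1 := by
  cases n with
  | zero => omega
  | succ m =>
  obtain ⟨φ, hφ, P, hpath, hdis⟩ := h
  -- map each j ≠ 0 to a distinct neighbor of φ 0
  have key : ∀ x : Fin m, ¬ (P 0 x.succ).Nil := by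
    intro x
    refine SimpleGraph.Walk.not_nil_of_ne (fun hc => ?_)
    exact (Fin.succ_ne_zero x) (hφ hc).symm
  let g : Fin m → (G2 t r).neighborSet (φ 0) := fun x =>
    ⟨(P 0 x.succ).getVert 1, (P 0 x.succ).adj_snd (key x)⟩
  have hginj : Function.Injective g := by
    intro x y hxy
    by_contra hne
    have hx : s(φ 0, (P 0 x.succ).getVert 1) ∈ (P 0 x.succ).edges :=
      first_edge_mem _ (key x)
    have hy : s(φ 0, (P 0 x.succ).getVert 1) ∈ (P 0 y.succ).edges := by
      have : (P 0 x.succ).getVert 1 = (P 0 y.succ).getVert 1 := congrArg Subtype.val hxy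
      rw [this]
      exact first_edge_mem _ (key y)
    have hpairs : ((0 : Fin (m+1)), x.succ) ≠ (0, y.succ) := by
      intro hc
      rw [Prod.mk.injEq] at hc
      exact hne (Fin.succ_injective _ hc.2)
    exact hdis 0 x.succ 0 y.succ (Fin.succ_pos x) (Fin.succ_pos y) hpairs hx hy
  have hcard := Fintype.card_le_of_injective g hginj
  rw [Fintype.card_fin, card_neighborSet_eq_degree, degree_boxProd] at hcard
  simp only [complete_graph_degree, Fintype.card_fin] at hcard
  omega

lemma lower_immersion (t r : ℕ) (ht : 1 ≤ t) (hr : 1 ≤ r) :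
    HasCliqueImmersion (G2 t r) (t + r - 1) :=
  ⟨phi t r ht hr, phi_inj t r ht hr,
    fun i j => W (phi t r ht hr i) (phi t r ht hr j),
    fun i j hij => isPath_W _ _ (fun hc => (ne_of_lt hij) (phi_inj t r ht hr hc)),
    fun i j k l hij hkl hne => disjoint_W t r ht hr i j k l hij hkl hne⟩

end ImmersionAux

theorem immersion_boxProd_complete (t r : ℕ) (ht : 1 ≤ t) (hr : 1 ≤ r) :
    immersionNumber ((⊤ : SimpleGraph (Fin t)).boxProd (⊤ : SimpleGraph (Fin r))) =
      t + r - 1 := by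
  have hl := lower_immersion t r ht hr
  have hu : ∀ n ∈ {n | HasCliqueImmersion (G2 t r) n}, n ≤ t + r - 1 :=
    fun n hn => upper t r n ht hr hn
  unfold immersionNumber
  exact le_antisymm (csSup_le ⟨_, hl⟩ hu) (le_csSup ⟨t + r - 1, hu⟩ hl)
end

section
/- Let G be a graph, C a set of edges whose removal disconnects G, and M a connected component of G−C. If G has a K_n-immersion in which k terminals lie in G−M and j terminals lie in M, then |C| ≥ k·j. -/
/-!
A path joining a terminal outside `M` to a terminal in `M` cannot stay inside `G − C`, so it uses
an edge of `C`. The `k * j` such paths are pairwise edge-disjoint, hence these edges are distinct.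
-/

set_option linter.unusedVariables false

open SimpleGraph

section CrossingPairs

variable {ι β α : Type*} [LinearOrder ι] (c : ι → β) (m : β)

lemma min_max_injective_of_separated :
    Function.Injective fun x : {i // c i ≠ m} × {i // c i = m} =>
      (min x.1.1 x.2.1, max x.1.1 x.2.1) := by
  rintro ⟨⟨a, ha⟩, ⟨b, hb⟩⟩ ⟨⟨a', ha'⟩, ⟨b', hb'⟩⟩ h
  simp only [Prod.mk.injEq, Subtype.mk.injEq] at h ⊢
  grind

theorem card_mul_card_le_of_crossing_pairs (C : Finset α) (E : ι → ι → List α)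
    (hdisj : ∀ a b a' b', a < b → a' < b' → (a, b) ≠ (a', b') → (E a b).Disjoint (E a' b'))
    (hcross : ∀ a b, a < b → c a ≠ c b → ∃ e ∈ C, e ∈ E a b) :
    Nat.card {i // c i ≠ m} * Nat.card {i // c i = m} ≤ C.card := by
  have hcross_sorted : ∀ x : {i // c i ≠ m} × {i // c i = m},
      ∃ e ∈ C, e ∈ E (min x.1.1 x.2.1) (max x.1.1 x.2.1) := by
    rintro ⟨⟨a, ha⟩, ⟨b, hb⟩⟩
    rcases lt_or_gt_of_ne (fun h : a = b => ha (h ▸ hb)) with hab | hab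
    · simpa [min_eq_left hab.le, max_eq_right hab.le] using hcross a b hab (hb ▸ ha)
    · simpa [min_eq_right hab.le, max_eq_left hab.le] using hcross b a hab (hb ▸ Ne.symm ha)
  choose f hfC hfE using hcross_sorted
  have hf : Function.Injective fun x => (⟨f x, hfC x⟩ : C) := by
    intro x y hxy
    have hfxy : f x = f y := congrArg Subtype.val hxy
    have hlt : ∀ z : {i // c i ≠ m} × {i // c i = m}, min z.1.1 z.2.1 < max z.1.1 z.2.1 :=
      fun z => min_lt_max.mpr fun h => z.1.2 (h ▸ z.2.2)
    apply min_max_injective_of_separated c m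
    by_contra hne
    exact hdisj _ _ _ _ (hlt x) (hlt y) hne (hfE x) (hfxy ▸ hfE y)
  calc Nat.card {i // c i ≠ m} * Nat.card {i // c i = m}
      = Nat.card ({i // c i ≠ m} × {i // c i = m}) := Nat.card_prod .. |>.symm
    _ ≤ Nat.card C := Nat.card_le_card_of_injective _ hf
    _ = C.card := Nat.card_eq_finsetCard C

end CrossingPairs

theorem edge_cut_separating_general {V : Type*} (G : SimpleGraph V)
    (C : Finset (Sym2 V))
    (M : (G.deleteEdges ↑C).ConnectedComponent)
    (n k j : ℕ) (φ : Fin n → V)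
    (P : ∀ a b : Fin n, G.Walk (φ a) (φ b))
    (hdisj : ∀ a b c d : Fin n, a < b → c < d → (a, b) ≠ (c, d) →
      List.Disjoint (P a b).edges (P c d).edges)
    (hk : Nat.card {i : Fin n // (G.deleteEdges ↑C).connectedComponentMk (φ i) ≠ M} = k)
    (hj : Nat.card {i : Fin n // (G.deleteEdges ↑C).connectedComponentMk (φ i) = M} = j) :
    k * j ≤ C.card := by
  subst hk hj
  refine card_mul_card_le_of_crossing_pairs (fun i => (G.deleteEdges ↑C).connectedComponentMk (φ i))
    M C (fun a b => (P a b).edges) hdisj fun a b _ hab => ?_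
  exact (P a b).exists_mem_edges_of_not_reachable_deleteEdges (hab ∘ ConnectedComponent.sound)

theorem edge_cut_separating {V : Type*} [Fintype V] (G : SimpleGraph V)
    (C : Finset (Sym2 V)) (hC : ↑C ⊆ G.edgeSet)
    (hdisc : ¬ (G.deleteEdges ↑C).Connected)
    (M : (G.deleteEdges ↑C).ConnectedComponent)
    (n k j : ℕ) (φ : Fin n → V) (hinj : Function.Injective φ)
    (P : ∀ a b : Fin n, G.Walk (φ a) (φ b))
    (hpath : ∀ a b : Fin n, a < b → (P a b).IsPath)
    (hdisj : ∀ a b c d : Fin n, a < b → c < d → (a, b) ≠ (c, d) →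
      List.Disjoint (P a b).edges (P c d).edges)
    (hk : Nat.card {i : Fin n // (G.deleteEdges ↑C).connectedComponentMk (φ i) ≠ M} = k)
    (hj : Nat.card {i : Fin n // (G.deleteEdges ↑C).connectedComponentMk (φ i) = M} = j) :
    k * j ≤ C.card :=
  edge_cut_separating_general G C M n k j φ P hdisj hk hj
end

section
/- For every t ≥ 1 and every n ≥ 2, the immersion number of the Cartesian product K_t□P_n equals t + 1, where P_n is the path on n vertices. -/
set_option linter.unusedVariables false

open SimpleGraph

section ImmersionProofAux

private abbrev Gbox (t n : ℕ) : SimpleGraph (Fin t × Fin n) :=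
  (⊤ : SimpleGraph (Fin t)).boxProd (SimpleGraph.pathGraph n)

private lemma cross_edge {t n : ℕ} {a b : Fin t × Fin n} (h : (Gbox t n).Adj a b) {k : ℕ}
    (ha : (a.2 : ℕ) ≤ k) (hb : k < (b.2 : ℕ)) :
    a.1 = b.1 ∧ (a.2 : ℕ) = k ∧ (b.2 : ℕ) = k + 1 := by
  rw [SimpleGraph.boxProd_adj] at h
  rcases h with ⟨-, h2⟩ | ⟨h1, h2⟩
  · rw [h2] at ha; omega
  · rw [SimpleGraph.pathGraph_adj] at h1
    exact ⟨h2, by omega, by omega⟩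

private lemma walk_cross {t n : ℕ} {u v : Fin t × Fin n} (w : (Gbox t n).Walk u v) :
    ∀ k : ℕ, (u.2 : ℕ) ≤ k → k < (v.2 : ℕ) →
    ∃ a b : Fin t × Fin n, s(a, b) ∈ w.edges ∧ a.1 = b.1 ∧ (a.2 : ℕ) = k ∧ (b.2 : ℕ) = k + 1 := by
  induction w with
  | nil => intro k h1 h2; omega
  | @cons x y z h p ih =>
    intro k h1 h2
    by_cases hc : ((y.2 : ℕ)) ≤ k
    · obtain ⟨a, b, hm, h3⟩ := ih k hc h2
      exact ⟨a, b, by simp [hm], h3⟩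
    · push_neg at hc
      obtain ⟨e1, e2, e3⟩ := cross_edge h h1 hc
      exact ⟨_, _, by simp, e1, e2, e3⟩

private lemma imm_upper {t n : ℕ} (ht : 1 ≤ t) {m : ℕ} (hm : HasCliqueImmersion (Gbox t n) m) :
    m ≤ t + 1 := by
  by_contra hcon
  push_neg at hcon
  obtain ⟨φ, hinj, P, hpath, hdisj⟩ := hm
  classical
  set L : Fin m → ℕ := fun i => ((φ i).2 : ℕ) with hL
  by_cases hall : ∀ i j : Fin m, L i = L j
  · have hinj1 : Function.Injective (fun i : Fin m => (φ i).1) := by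
      intro i j hij
      apply hinj
      exact Prod.ext hij (Fin.val_injective (hall i j))
    have := Fintype.card_le_of_injective _ hinj1
    simp only [Fintype.card_fin] at this
    omega
  · push_neg at hall
    obtain ⟨i0, j0, hne0⟩ := hall
    obtain ⟨imin, -, hmin⟩ := Finset.exists_min_image Finset.univ L ⟨i0, Finset.mem_univ _⟩
    set k := L imin with hk
    have hminle : ∀ i, k ≤ L i := fun i => hmin i (Finset.mem_univ i)
    set A : Finset (Fin m) := Finset.univ.filter (fun i => L i ≤ k) with hA
    set B : Finset (Fin m) := Finset.univ.filter (fun i => k < L i) with hB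
    have hAne : imin ∈ A := by simp [hA, hk]
    have hBne : B.Nonempty := by
      rcases lt_or_ge k (L i0) with h | h
      · exact ⟨i0, by simp [hB, h]⟩
      · have h0 : L i0 = k := le_antisymm h (hminle i0)
        have : k < L j0 := lt_of_le_of_ne (hminle j0) (by omega)
        exact ⟨j0, by simp [hB, this]⟩
    have key : ∀ p : Fin m × Fin m, L p.1 ≤ k ∧ k < L p.2 →
        ∃ x : Fin t, ∃ a b : Fin t × Fin n, a.1 = x ∧ b.1 = x ∧
          (a.2 : ℕ) = k ∧ (b.2 : ℕ) = k + 1 ∧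
          (if p.1 < p.2 then s(a,b) ∈ (P p.1 p.2).edges else s(a,b) ∈ (P p.2 p.1).edges) := by
      intro p h
      obtain ⟨h1, h2⟩ := h
      by_cases hlt : p.1 < p.2
      · obtain ⟨a, b, hm', e1, e2, e3⟩ := walk_cross (P p.1 p.2) k h1 h2
        exact ⟨a.1, a, b, rfl, e1.symm, e2, e3, by simp [hlt, hm']⟩
      · obtain ⟨a, b, hm', e1, e2, e3⟩ := walk_cross (P p.2 p.1).reverse k h1 h2
        rw [SimpleGraph.Walk.edges_reverse, List.mem_reverse] at hm'
        exact ⟨a.1, a, b, rfl, e1.symm, e2, e3, by simp [hlt, hm']⟩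
    set f : Fin m × Fin m → Fin t := fun p =>
      if h : L p.1 ≤ k ∧ k < L p.2 then (key p h).choose else ⟨0, ht⟩ with hf
    have condOf : ∀ p : Fin m × Fin m, p ∈ A ×ˢ B → L p.1 ≤ k ∧ k < L p.2 := by
      intro p hp
      rw [Finset.mem_product] at hp
      refine ⟨?_, ?_⟩
      · have := hp.1; rw [hA, Finset.mem_filter] at this; exact this.2
      · have := hp.2; rw [hB, Finset.mem_filter] at this; exact this.2
    have hinjOn : Set.InjOn f ↑(A ×ˢ B) := by
      intro p hp q hq hfeq
      have hp' := condOf p (by simpa using hp)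
      have hq' := condOf q (by simpa using hq)
      rw [hf] at hfeq
      simp only [dif_pos hp', dif_pos hq'] at hfeq
      obtain ⟨a, b, ha1, hb1, ha2, hb2, hmem⟩ := (key p hp').choose_spec
      obtain ⟨a', b', ha1', hb1', ha2', hb2', hmem'⟩ := (key q hq').choose_spec
      have haa : a = a' := by
        refine Prod.ext ?_ (Fin.val_injective (by omega))
        rw [ha1, ha1', hfeq]
      have hbb : b = b' := by
        refine Prod.ext ?_ (Fin.val_injective (by omega))
        rw [hb1, hb1', hfeq]
      subst haa hbb
      have hpne : p.1 ≠ p.2 := fun h => by rw [h] at hp'; omega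
      have hqne : q.1 ≠ q.2 := fun h => by rw [h] at hq'; omega
      by_cases h1 : p.1 < p.2 <;> by_cases h2 : q.1 < q.2
      · rw [if_pos h1] at hmem; rw [if_pos h2] at hmem'
        have hop : (p.1, p.2) = (q.1, q.2) := by
          by_contra hne
          exact hdisj p.1 p.2 q.1 q.2 h1 h2 hne hmem hmem'
        rw [Prod.mk.injEq] at hop
        exact Prod.ext hop.1 hop.2
      · rw [if_pos h1] at hmem; rw [if_neg h2] at hmem'
        have h2' : q.2 < q.1 := lt_of_le_of_ne (le_of_not_gt h2) (Ne.symm hqne)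
        have hop : (p.1, p.2) = (q.2, q.1) := by
          by_contra hne
          exact hdisj p.1 p.2 q.2 q.1 h1 h2' hne hmem hmem'
        rw [Prod.mk.injEq] at hop
        have : L p.1 = L q.2 := by rw [hop.1]
        omega
      · rw [if_neg h1] at hmem; rw [if_pos h2] at hmem'
        have h1' : p.2 < p.1 := lt_of_le_of_ne (le_of_not_gt h1) (Ne.symm hpne)
        have hop : (p.2, p.1) = (q.1, q.2) := by
          by_contra hne
          exact hdisj p.2 p.1 q.1 q.2 h1' h2 hne hmem hmem'
        rw [Prod.mk.injEq] at hop
        have : L p.2 = L q.1 := by rw [hop.1]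
        omega
      · rw [if_neg h1] at hmem; rw [if_neg h2] at hmem'
        have h1' : p.2 < p.1 := lt_of_le_of_ne (le_of_not_gt h1) (Ne.symm hpne)
        have h2' : q.2 < q.1 := lt_of_le_of_ne (le_of_not_gt h2) (Ne.symm hqne)
        have hop : (p.2, p.1) = (q.2, q.1) := by
          by_contra hne
          exact hdisj p.2 p.1 q.2 q.1 h1' h2' hne hmem hmem'
        rw [Prod.mk.injEq] at hop
        exact Prod.ext hop.2 hop.1
    have hcard_le : (A ×ˢ B).card ≤ t := by
      have := Finset.card_le_card_of_injOn f (fun _ _ => Finset.mem_univ _) hinjOn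
      simpa using this
    have hcardsum : A.card + B.card = m := by
      have hBeq : B = Finset.univ.filter (fun i => ¬ L i ≤ k) := by
        rw [hB]; congr 1; ext i; simp [not_le]
      rw [hA, hBeq, Finset.card_filter_add_card_filter_not, Finset.card_univ,
        Fintype.card_fin]
    have hA1 : 1 ≤ A.card := Finset.card_pos.mpr ⟨imin, hAne⟩
    have hB1 : 1 ≤ B.card := Finset.card_pos.mpr hBne
    rw [Finset.card_product] at hcard_le
    obtain ⟨a', ha'⟩ := Nat.exists_eq_add_of_le hA1
    obtain ⟨b', hb'⟩ := Nat.exists_eq_add_of_le hB1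
    rw [ha', hb'] at hcard_le hcardsum
    nlinarith

private def phiV {t n : ℕ} (ht : 1 ≤ t) (hn : 2 ≤ n) (i : Fin (t + 1)) : Fin t × Fin n :=
  if h : (i : ℕ) < t then (⟨i, h⟩, ⟨0, by omega⟩) else (⟨0, by omega⟩, ⟨1, by omega⟩)

private lemma phiV_lt {t n : ℕ} (ht : 1 ≤ t) (hn : 2 ≤ n) {i : Fin (t + 1)} (h : (i : ℕ) < t) :
    phiV ht hn i = (⟨i, h⟩, ⟨0, by omega⟩) := dif_pos h

private lemma phiV_last {t n : ℕ} (ht : 1 ≤ t) (hn : 2 ≤ n) {i : Fin (t + 1)} (h : ¬ (i : ℕ) < t) :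
    phiV ht hn i = (⟨0, by omega⟩, ⟨1, by omega⟩) := dif_neg h

private lemma adjC {t n : ℕ} {a b : Fin t} (hab : a ≠ b) (c : Fin n) :
    (Gbox t n).Adj (a, c) (b, c) :=
  SimpleGraph.boxProd_adj.mpr (Or.inl ⟨hab, rfl⟩)

private lemma adjV {t n : ℕ} (hn : 2 ≤ n) (a : Fin t) :
    (Gbox t n).Adj (a, ⟨0, by omega⟩) (a, ⟨1, by omega⟩) :=
  SimpleGraph.boxProd_adj.mpr (Or.inr ⟨SimpleGraph.pathGraph_adj.mpr (Or.inl rfl), rfl⟩)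

private lemma gbox_conn {t n : ℕ} (ht : 1 ≤ t) (hn : 2 ≤ n) : (Gbox t n).Connected := by
  rw [SimpleGraph.connected_boxProd]
  constructor
  · have : Nonempty (Fin t) := ⟨⟨0, ht⟩⟩
    refine ⟨fun u v => ?_⟩
    by_cases h : u = v
    · exact h ▸ SimpleGraph.Reachable.refl u
    · exact ((SimpleGraph.top_adj u v).mpr h).reachable
  · obtain ⟨n', rfl⟩ : ∃ n', n = n' + 1 := ⟨n - 1, by omega⟩
    exact SimpleGraph.pathGraph_connected n'

private noncomputable def PP {t n : ℕ} (ht : 1 ≤ t) (hn : 2 ≤ n) (i j : Fin (t + 1)) :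
    (Gbox t n).Walk (phiV ht hn i) (phiV ht hn j) :=
  if hij : i < j then
    if hj : (j : ℕ) < t then
      (Walk.cons (adjC (a := ⟨i, by omega⟩) (b := ⟨j, hj⟩)
          (by simp [Fin.ext_iff]; omega) ⟨0, by omega⟩) Walk.nil).copy
        (phiV_lt ht hn (by omega)).symm (phiV_lt ht hn hj).symm
    else if hi : (i : ℕ) = 0 then
      (Walk.cons (adjV hn ⟨0, by omega⟩) Walk.nil).copy
        (by rw [phiV_lt ht hn (show (i : ℕ) < t by omega)]
            simp [Prod.ext_iff, Fin.ext_iff]; omega)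
        (by rw [phiV_last ht hn hj])
    else
      (Walk.cons (adjV hn ⟨i, by omega⟩)
        (Walk.cons (adjC (a := (⟨i, by omega⟩ : Fin t)) (b := ⟨0, by omega⟩)
          (Fin.ne_of_val_ne hi) ⟨1, by omega⟩) Walk.nil)).copy
        (phiV_lt ht hn (by omega)).symm
        (by rw [phiV_last ht hn hj])
  else ((gbox_conn ht hn).preconnected _ _).some

private lemma imm_lower {t n : ℕ} (ht : 1 ≤ t) (hn : 2 ≤ n) :
    HasCliqueImmersion (Gbox t n) (t + 1) := by
  refine ⟨phiV ht hn, ?_, PP ht hn, ?_, ?_⟩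
  · intro i j hij
    have hi2 := i.isLt
    have hj2 := j.isLt
    by_cases hi : (i : ℕ) < t <;> by_cases hj : (j : ℕ) < t
    · rw [phiV_lt ht hn hi, phiV_lt ht hn hj] at hij
      simp only [Prod.mk.injEq, Fin.mk.injEq] at hij
      exact Fin.val_injective (by omega)
    · rw [phiV_lt ht hn hi, phiV_last ht hn hj] at hij
      simp only [Prod.mk.injEq, Fin.mk.injEq] at hij
      omega
    · rw [phiV_last ht hn hi, phiV_lt ht hn hj] at hij
      simp only [Prod.mk.injEq, Fin.mk.injEq] at hij
      omega
    · exact Fin.val_injective (by omega)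
  · intro i j hij
    have hij' : (i : ℕ) < (j : ℕ) := hij
    have hj2 := j.isLt
    unfold PP
    rw [dif_pos hij]
    split_ifs with hj hi
    · simp [SimpleGraph.Walk.cons_isPath_iff, Prod.ext_iff, Fin.ext_iff] <;> omega
    · simp [SimpleGraph.Walk.cons_isPath_iff, Prod.ext_iff, Fin.ext_iff] <;> omega
    · simp only [SimpleGraph.Walk.isPath_copy, SimpleGraph.Walk.cons_isPath_iff]
      simp only [SimpleGraph.Walk.IsPath.nil, SimpleGraph.Walk.support_cons, SimpleGraph.Walk.support_nil,
        List.mem_cons, List.mem_singleton, List.not_mem_nil, Prod.mk.injEq, Fin.mk.injEq, true_and, and_true, or_false]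
      omega
  · intro i j k l hij hkl hne
    have hne' : ¬((i : ℕ) = k ∧ (j : ℕ) = l) := by
      rintro ⟨h1, h2⟩
      exact hne (by rw [Prod.mk.injEq]
                    exact ⟨Fin.val_injective h1, Fin.val_injective h2⟩)
    have hij' : (i : ℕ) < (j : ℕ) := hij
    have hkl' : (k : ℕ) < (l : ℕ) := hkl
    have hj2 := j.isLt
    have hl2 := l.isLt
    unfold PP
    rw [dif_pos hij, dif_pos hkl]
    split_ifs with h1 h2 h2 h3 h4 h5 <;>
      simp only [SimpleGraph.Walk.edges_copy, SimpleGraph.Walk.edges_cons,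
        SimpleGraph.Walk.edges_nil, List.disjoint_left, List.mem_cons,
        List.not_mem_nil, or_false, List.mem_singleton, forall_eq_or_imp, forall_eq,
        Sym2.eq, Sym2.rel_iff', Prod.mk.injEq, Fin.mk.injEq, Prod.swap_prod_mk,
        not_or, not_and, and_true, true_and, not_true, IsEmpty.forall_iff, forall_true_left,
        imp_false, zero_ne_one, one_ne_zero, false_and, and_false,
        not_false_eq_true] <;>
      omega

end ImmersionProofAux

theorem immersion_complete_boxProd_path (t n : ℕ) (ht : 1 ≤ t) (hn : 2 ≤ n) :
    immersionNumber ((⊤ : SimpleGraph (Fin t)).boxProd (SimpleGraph.pathGraph n)) = t + 1 := by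
  have hmem : HasCliqueImmersion (Gbox t n) (t + 1) := imm_lower ht hn
  have hub : ∀ m ∈ {m | HasCliqueImmersion (Gbox t n) m}, m ≤ t + 1 :=
    fun m hm => imm_upper ht hm
  exact le_antisymm (csSup_le ⟨t + 1, hmem⟩ hub)
    (le_csSup ⟨t + 1, fun m hm => hub m hm⟩ hmem)
end

section
/- Let G be a connected finite simple graph with im(G) = t that is not isomorphic to K_t. Then for every n ≥ 5, im(G□P_n) ≥ t + 2. -/
set_option linter.unusedVariables false

open SimpleGraph

/-!
Fix a `K_t`-immersion of `G` with terminals `φ`, and one terminal `φ r`. A graph on `t` vertices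
with a `K_t`-immersion is complete (every terminal has degree at least `t - 1`), so some vertex
`u` of `G` is not a terminal. In `G □ P₅`, with levels `0, …, 4`, keep the old terminals and
their walks in level `2` and add the terminals `(φ r, 1)` and `(φ r, 3)`. The terminal `(φ i, 2)`
reaches `(φ r, 1)` by one step down and then along the walk between `φ i` and `φ r` inside
level `1`; symmetrically through level `3` for `(φ r, 3)`. The two new terminals are joined
through level `0`, the column of `u` and level `4`. Edges in different levels never meet, and
the vertical edges at `u` are unused elsewhere because `u` is not a terminal.
-/

namespace SimpleGraph

open Walk

variable {V V' ι : Type*} {G : SimpleGraph V} {G' : SimpleGraph V'}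

/-- Walks rather than paths: `Walk.bypass` shortens a walk to a path without adding edges. -/
structure IsCliqueImmersion [LinearOrder ι] (G : SimpleGraph V) (φ : ι → V)
    (P : ∀ i j, G.Walk (φ i) (φ j)) : Prop where
  injective : Function.Injective φ
  disjoint_edges : ∀ ⦃i j k l⦄, i < j → k < l → (i, j) ≠ (k, l) →
    (P i j).edges.Disjoint (P k l).edges

theorem _root_.HasCliqueImmersion.exists_isCliqueImmersion {t : ℕ}
    (h : HasCliqueImmersion G t) :
    ∃ (φ : Fin t → V) (P : ∀ i j, G.Walk (φ i) (φ j)), G.IsCliqueImmersion φ P := by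
  obtain ⟨φ, hφ, P, -, hP⟩ := h
  exact ⟨φ, P, hφ, hP⟩

namespace IsCliqueImmersion

variable [LinearOrder ι] {φ : ι → V} {P : ∀ i j, G.Walk (φ i) (φ j)}

theorem hasCliqueImmersion [Fintype ι] (h : G.IsCliqueImmersion φ P) :
    HasCliqueImmersion G (Fintype.card ι) := by
  classical
  let e := Fintype.orderIsoFinOfCardEq ι rfl
  refine ⟨φ ∘ e, h.injective.comp e.injective, fun i j => (P (e i) (e j)).bypass,
    fun i j _ => bypass_isPath _, fun i j k l hij hkl hne => ?_⟩
  have hne' : (e i, e j) ≠ (e k, e l) := by simpa [e.injective.eq_iff] using hne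
  exact List.disjoint_of_subset_left (edges_bypass_subset_edges _) <|
    List.disjoint_of_subset_right (edges_bypass_subset_edges _) <|
      h.disjoint_edges (e.lt_iff_lt.2 hij) (e.lt_iff_lt.2 hkl) hne'

theorem map (h : G.IsCliqueImmersion φ P) (f : G ↪g G') :
    G'.IsCliqueImmersion (fun i => f (φ i)) (fun i j => (P i j).map f.toHom) where
  injective := f.injective.comp h.injective
  disjoint_edges i j k l hij hkl hne := by
    rw [edges_map, edges_map]
    exact (h.disjoint_edges hij hkl hne).map (Sym2.map.injective f.injective)

theorem exists_spokes (h : G.IsCliqueImmersion φ P) (r : ι) :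
    ∃ S : ∀ i, G.Walk (φ i) (φ r), Pairwise fun i j => (S i).edges.Disjoint (S j).edges := by
  refine ⟨fun i => if hi : i < r then P i r else if hr : r < i then (P r i).reverse
    else Walk.nil.copy rfl (congrArg φ (le_antisymm (not_lt.1 hr) (not_lt.1 hi))),
    fun i j hij => ?_⟩
  dsimp only
  split_ifs <;>
    (try simp only [edges_reverse, edges_copy, edges_nil, List.disjoint_reverse_left,
      List.disjoint_reverse_right, List.disjoint_nil_left, List.disjoint_nil_right]) <;>
    first
    | trivial
    | exact h.disjoint_edges ‹_› ‹_› (by grind)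

theorem card_sub_one_le_degree [Fintype ι] [Fintype V] [DecidableRel G.Adj]
    (h : G.IsCliqueImmersion φ P) (r : ι) : Fintype.card ι - 1 ≤ G.degree (φ r) := by
  classical
  obtain ⟨S, hS⟩ := h.exists_spokes r
  have hnil : ∀ i ∈ Finset.univ.erase r, ¬(S i).reverse.Nil := fun i hi hnil =>
    Finset.ne_of_mem_erase hi (h.injective hnil.eq).symm
  -- distinct spokes leave `φ r` through distinct edges, hence towards distinct neighbours
  have hinj : Set.InjOn (fun i => (S i).reverse.snd) (Finset.univ.erase r) := by
    intro i hi j hj (hij : (S i).reverse.snd = (S j).reverse.snd)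
    by_contra hne
    have hi' := mk_start_snd_mem_edges (hnil i hi)
    have hj' := mk_start_snd_mem_edges (hnil j hj)
    simp only [edges_reverse, List.mem_reverse] at hi' hj'
    exact hS hne hi' (hij ▸ hj')
  calc Fintype.card ι - 1 = (Finset.univ.erase r).card := by
        rw [Finset.card_erase_of_mem (Finset.mem_univ r), Finset.card_univ]
    _ ≤ (G.neighborFinset (φ r)).card := Finset.card_le_card_of_injOn _
        (fun i hi => (mem_neighborFinset _ _ _).2 (adj_snd (hnil i hi))) hinj
    _ = G.degree (φ r) := card_neighborFinset_eq_degree _ _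

end IsCliqueImmersion

theorem _root_.HasCliqueImmersion.eq_top [Fintype V]
    (h : HasCliqueImmersion G (Fintype.card V)) : G = ⊤ := by
  classical
  obtain ⟨φ, P, hP⟩ := h.exists_isCliqueImmersion
  have hφ : Function.Surjective φ :=
    ((Fintype.bijective_iff_injective_and_card φ).2 ⟨hP.injective, by simp⟩).2
  refine eq_top_iff_forall_isUniversal.2 fun v => ?_
  obtain ⟨r, rfl⟩ := hφ v
  refine (G.degree_eq_card_sub_one _).1 (le_antisymm ?_ ?_)
  · exact Nat.le_sub_one_of_lt (G.degree_lt_card_verts _)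
  · simpa using hP.card_sub_one_le_degree r

theorem _root_.HasCliqueImmersion.le_card [Fintype V] {t : ℕ} (h : HasCliqueImmersion G t) :
    t ≤ Fintype.card V := by
  obtain ⟨φ, hφ, -⟩ := h
  simpa using Fintype.card_le_of_injective φ hφ

theorem _root_.HasCliqueImmersion.le_immersionNumber [Fintype V] {t : ℕ}
    (h : HasCliqueImmersion G t) : t ≤ immersionNumber G :=
  le_csSup ⟨Fintype.card V, fun _ hs => hs.le_card⟩ h

theorem hasCliqueImmersion_immersionNumber [Fintype V] (G : SimpleGraph V) :
    HasCliqueImmersion G (immersionNumber G) :=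
  Nat.sSup_mem (s := {t | HasCliqueImmersion G t})
    ⟨0, Fin.elim0, fun i => i.elim0, fun i => i.elim0, fun i => i.elim0, fun i => i.elim0⟩
    ⟨Fintype.card V, fun _ hs => hs.le_card⟩

theorem hasCliqueImmersion_one (v : V) : HasCliqueImmersion G 1 :=
  ⟨fun _ => v, fun _ _ _ => Subsingleton.elim _ _, fun _ _ => Walk.nil,
    fun i j hij => absurd hij (by omega), fun i j _ _ hij => absurd hij (by omega)⟩

section AddTerminal

variable {φ : ι → V} {P : ∀ i j, G.Walk (φ i) (φ j)} {a : V}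

def extendTerminals (φ : ι → V) (a : V) : WithTop ι → V
  | (i : ι) => φ i
  | ⊤ => a

def extendWalks (P : ∀ i j, G.Walk (φ i) (φ j)) (S : ∀ i, G.Walk (φ i) a) :
    ∀ x y, G.Walk (extendTerminals φ a x) (extendTerminals φ a y)
  | (i : ι), (j : ι) => P i j
  | (i : ι), ⊤ => S i
  | ⊤, (j : ι) => (S j).reverse
  | ⊤, ⊤ => Walk.nil

variable {S : ∀ i, G.Walk (φ i) a}

theorem disjoint_edges_extendWalks [LinearOrder ι] {L : List (Sym2 V)}
    (hP : ∀ ⦃j k⦄, j < k → L.Disjoint (P j k).edges) (hS : ∀ i, L.Disjoint (S i).edges) :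
    ∀ ⦃x y : WithTop ι⦄, x < y → L.Disjoint (extendWalks P S x y).edges := by
  intro x y hxy
  cases x with
  | top => exact absurd hxy not_top_lt
  | coe j =>
    cases y with
    | top => exact hS j
    | coe k => exact hP (WithTop.coe_lt_coe.1 hxy)

theorem IsCliqueImmersion.extend [LinearOrder ι] (h : G.IsCliqueImmersion φ P)
    (ha : a ∉ Set.range φ)
    (hS : Pairwise fun i j => (S i).edges.Disjoint (S j).edges)
    (hSP : ∀ i ⦃j k⦄, j < k → (S i).edges.Disjoint (P j k).edges) :
    G.IsCliqueImmersion (extendTerminals φ a) (extendWalks P S) where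
  injective x y hxy := by
    cases x <;> cases y <;> simp only [extendTerminals] at hxy
    · rfl
    · exact absurd ⟨_, hxy.symm⟩ ha
    · exact absurd ⟨_, hxy⟩ ha
    · rw [h.injective hxy]
  disjoint_edges x y x' y' hxy hxy' hne := by
    cases x with
    | top => exact absurd hxy not_top_lt
    | coe i =>
    cases x' with
    | top => exact absurd hxy' not_top_lt
    | coe i' =>
    cases y with
    | top =>
      cases y' with
      | top => exact hS (by simpa using hne)
      | coe j' => exact hSP i (WithTop.coe_lt_coe.1 hxy')
    | coe j =>
      cases y' with
      | top => exact (hSP i' (WithTop.coe_lt_coe.1 hxy)).symm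
      | coe j' =>
        exact h.disjoint_edges (WithTop.coe_lt_coe.1 hxy) (WithTop.coe_lt_coe.1 hxy')
          (by simpa using hne)

end AddTerminal

theorem _root_.Fintype.card_withTop (α : Type*) [Fintype α] :
    Fintype.card (WithTop α) = Fintype.card α + 1 :=
  Fintype.card_option

section BoxProd

variable {α α₂ β β₂ : Type*} {G : SimpleGraph α} {G₂ : SimpleGraph α₂} {H : SimpleGraph β}
  {H₂ : SimpleGraph β₂} {e : Sym2 (α × β)}

theorem Walk.map_fst_mem_edges_of_mem_edges_boxProdLeft {a₁ a₂ : α} {p : G.Walk a₁ a₂} {b : β}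
    (he : e ∈ (p.boxProdLeft H b).edges) : e.map Prod.fst ∈ p.edges := by
  obtain ⟨e₀, he₀, rfl⟩ := List.mem_map.1 (edges_map _ p ▸ he)
  rwa [Sym2.map_map, show Prod.fst ∘ _ = id from rfl, Sym2.map_id, id]

theorem Walk.map_snd_of_mem_edges_boxProdLeft {a₁ a₂ : α} {p : G.Walk a₁ a₂} {b : β}
    (he : e ∈ (p.boxProdLeft H b).edges) : e.map Prod.snd = s(b, b) := by
  obtain ⟨e₀, -, rfl⟩ := List.mem_map.1 (edges_map _ p ▸ he)
  induction e₀ using Sym2.ind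
  rfl

theorem Walk.map_fst_of_mem_edges_boxProdRight {b₁ b₂ : β} {q : H.Walk b₁ b₂} {a : α}
    (he : e ∈ (q.boxProdRight G a).edges) : e.map Prod.fst = s(a, a) := by
  obtain ⟨e₀, -, rfl⟩ := List.mem_map.1 (edges_map _ q ▸ he)
  induction e₀ using Sym2.ind
  rfl

def Embedding.boxProdMap (f : G ↪g G₂) (g : H ↪g H₂) : (G □ H) ↪g (G₂ □ H₂) where
  toEmbedding := f.toEmbedding.prodMap g.toEmbedding
  map_rel_iff' := by simp [boxProd_adj, f.injective.eq_iff, g.injective.eq_iff]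

def Embedding.pathGraphCastLE {m n : ℕ} (h : m ≤ n) : pathGraph m ↪g pathGraph n where
  toEmbedding := Fin.castLEEmb h
  map_rel_iff' := by simp [pathGraph_adj]

end BoxProd

section FiveLayers

variable {φ : ι → V} {r : ι} (S : ∀ i, G.Walk (φ i) (φ r)) {e : Sym2 (V × Fin 5)}

def layerSpoke (k : Fin 5) (hk : (pathGraph 5).Adj 2 k) (i : ι) :
    (G □ pathGraph 5).Walk (φ i, 2) (φ r, k) :=
  Walk.cons (boxProd_adj_right.2 hk) ((S i).boxProdLeft _ k)

variable {S} {k : Fin 5} {hk : (pathGraph 5).Adj 2 k} {i : ι}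

theorem mem_edges_layerSpoke (he : e ∈ (layerSpoke S k hk i).edges) :
    (e.map Prod.fst = s(φ i, φ i) ∧ e.map Prod.snd = s(2, k)) ∨
      (e.map Prod.fst ∈ (S i).edges ∧ e.map Prod.snd = s(k, k)) := by
  rcases List.mem_cons.1 he with rfl | he
  · exact Or.inl ⟨rfl, rfl⟩
  · exact Or.inr ⟨map_fst_mem_edges_of_mem_edges_boxProdLeft he,
      map_snd_of_mem_edges_boxProdLeft he⟩

theorem disjoint_edges_layerSpoke (hφ : Function.Injective φ)
    (hS : Pairwise fun i j => (S i).edges.Disjoint (S j).edges)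
    {k' : Fin 5} {hk' : (pathGraph 5).Adj 2 k'} {i' : ι} (hne : (k, i) ≠ (k', i')) :
    (layerSpoke S k hk i).edges.Disjoint (layerSpoke S k' hk' i').edges := by
  intro e he he'
  rcases mem_edges_layerSpoke he with ⟨hf, hs⟩ | ⟨hf, hs⟩ <;>
    rcases mem_edges_layerSpoke he' with ⟨hf', hs'⟩ | ⟨hf', hs'⟩
  · obtain rfl := hφ (by simpa using hf.symm.trans hf')
    obtain rfl : k = k' := by simpa [hk'.ne] using hs.symm.trans hs'
    exact hne rfl
  · have : 2 = k' ∧ k = k' := by simpa using hs.symm.trans hs'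
    exact hk'.ne this.1
  · have : 2 = k ∧ k' = k := by simpa using hs'.symm.trans hs
    exact hk.ne this.1
  · obtain rfl : k = k' := by simpa using hs.symm.trans hs'
    exact hS (fun h => hne (by rw [h])) hf hf'

theorem disjoint_edges_layerSpoke_boxProdLeft {x y : V} (p : G.Walk x y) :
    (layerSpoke S k hk i).edges.Disjoint (p.boxProdLeft (pathGraph 5) 2).edges := by
  intro e he he'
  have hs' := map_snd_of_mem_edges_boxProdLeft he'
  rcases mem_edges_layerSpoke he with ⟨-, hs⟩ | ⟨-, hs⟩ <;> rw [hs] at hs' <;> simp at hs' <;>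
    exact hk.ne hs'.symm

variable {u : V} (Q : G.Walk (φ r) u)

noncomputable def detour : (G □ pathGraph 5).Walk (φ r, 1) (φ r, 3) :=
  Walk.cons (boxProd_adj_right.2 (by simp [pathGraph_adj])) <|
    (Q.boxProdLeft _ 0).append <|
      (((pathGraph_connected 4).preconnected 0 4).some.boxProdRight G u).append <|
        (Q.reverse.boxProdLeft _ 4).concat (boxProd_adj_right.2 (by simp [pathGraph_adj]))

variable {Q}

theorem mem_edges_detour (he : e ∈ (detour Q).edges) :
    e.map Prod.fst = s(u, u) ∨ e.map Prod.snd ∈ [s(1, 0), s(0, 0), s(4, 4), s(4, 3)] := by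
  simp only [detour, edges_cons, edges_append, edges_concat, List.mem_cons, List.mem_append,
    List.concat_eq_append, List.not_mem_nil, or_false] at he
  rcases he with rfl | he | he | he | rfl
  · simp
  · simp [map_snd_of_mem_edges_boxProdLeft he]
  · exact Or.inl (map_fst_of_mem_edges_boxProdRight he)
  · simp [map_snd_of_mem_edges_boxProdLeft he]
  · simp

theorem disjoint_edges_detour_layerSpoke (hu : u ∉ Set.range φ) :
    (detour Q).edges.Disjoint (layerSpoke S k hk i).edges := by
  intro e he he'
  have hk' : k = 1 ∨ k = 3 := by
    have := hk
    simp [pathGraph_adj] at this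
    omega
  rcases mem_edges_detour he with hf | hs <;>
    rcases mem_edges_layerSpoke he' with ⟨hf', hs'⟩ | ⟨hf', hs'⟩
  · exact hu ⟨i, by simpa using hf'.symm.trans hf⟩
  · exact G.irrefl ((mem_edgeSet G).1 ((S i).edges_subset_edgeSet (hf ▸ hf')))
  · rw [hs'] at hs
    rcases hk' with rfl | rfl <;> simp at hs
  · rw [hs'] at hs
    rcases hk' with rfl | rfl <;> simp at hs

theorem disjoint_edges_detour_boxProdLeft {x y : V} (p : G.Walk x y) :
    (detour Q).edges.Disjoint (p.boxProdLeft (pathGraph 5) 2).edges := by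
  intro e he he'
  rcases mem_edges_detour he with hf | hs
  · have := map_fst_mem_edges_of_mem_edges_boxProdLeft he'
    exact G.irrefl ((mem_edgeSet G).1 (p.edges_subset_edgeSet (hf ▸ this)))
  · rw [map_snd_of_mem_edges_boxProdLeft he'] at hs
    simp at hs

variable (S Q)

noncomputable def outerSpokes :
    ∀ x, (G □ pathGraph 5).Walk (extendTerminals (fun i => (φ i, 2)) (φ r, 1) x) (φ r, 3)
  | (i : ι) => layerSpoke S 3 (by simp [pathGraph_adj]) i
  | ⊤ => detour Q

end FiveLayers

theorem IsCliqueImmersion.hasCliqueImmersion_boxProd_pathGraph_five [LinearOrder ι] [Fintype ι]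
    {φ : ι → V} {P : ∀ i j, G.Walk (φ i) (φ j)} (h : G.IsCliqueImmersion φ P) (r : ι) {u : V}
    (hu : u ∉ Set.range φ) (hru : G.Reachable (φ r) u) :
    HasCliqueImmersion (G □ pathGraph 5) (Fintype.card ι + 2) := by
  obtain ⟨S, hS⟩ := h.exists_spokes r
  obtain ⟨Q⟩ := hru
  have h21 : (pathGraph 5).Adj 2 1 := by simp [pathGraph_adj]
  have h23 : (pathGraph 5).Adj 2 3 := by simp [pathGraph_adj]
  have hA : (G □ pathGraph 5).IsCliqueImmersion (fun i => (φ i, 2))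
      fun i j => (P i j).boxProdLeft _ 2 :=
    h.map (G.boxProdLeft (pathGraph 5) 2)
  have hB := hA.extend (S := layerSpoke S 1 h21) (a := (φ r, 1)) (by simp)
    (fun i j hij => disjoint_edges_layerSpoke h.injective hS (by simpa using hij))
    (fun i j k _ => disjoint_edges_layerSpoke_boxProdLeft _)
  have hC := hB.extend (S := outerSpokes S Q) (a := (φ r, 3)) ?_ ?_ ?_
  · simpa only [Fintype.card_withTop] using hC.hasCliqueImmersion
  · rintro ⟨x, hx⟩
    cases x <;> simp [extendTerminals] at hx
  · intro x y hxy
    cases x <;> cases y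
    · exact absurd rfl hxy
    · exact disjoint_edges_detour_layerSpoke (hk := h23) hu
    · exact (disjoint_edges_detour_layerSpoke (hk := h23) hu).symm
    · exact disjoint_edges_layerSpoke (hk := h23) (hk' := h23) h.injective hS
        (by simpa using hxy)
  · intro x
    cases x with
    | top =>
      exact disjoint_edges_extendWalks (fun j k _ => disjoint_edges_detour_boxProdLeft _)
        (fun i => disjoint_edges_detour_layerSpoke hu)
    | coe i =>
      exact disjoint_edges_extendWalks
        (fun j k _ => disjoint_edges_layerSpoke_boxProdLeft (hk := h23) _)
        (fun j => disjoint_edges_layerSpoke (hk := h23) h.injective hS (by simp))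

theorem _root_.HasCliqueImmersion.map {t : ℕ} (h : HasCliqueImmersion G t) (f : G ↪g G') :
    HasCliqueImmersion G' t := by
  obtain ⟨φ, P, hP⟩ := h.exists_isCliqueImmersion
  simpa using (hP.map f).hasCliqueImmersion

theorem _root_.HasCliqueImmersion.boxProd_pathGraph [Fintype V] {t n : ℕ}
    (h : HasCliqueImmersion G t) (hG : G.Preconnected) (ht : 0 < t)
    (htV : t < Fintype.card V) (hn : 5 ≤ n) :
    HasCliqueImmersion (G □ pathGraph n) (t + 2) := by
  obtain ⟨φ, P, hP⟩ := h.exists_isCliqueImmersion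
  obtain ⟨u, hu⟩ : ∃ u, u ∉ Set.range φ := by
    by_contra! hφ
    simpa using htV.trans_le (Fintype.card_le_of_surjective φ hφ)
  simpa using (hP.hasCliqueImmersion_boxProd_pathGraph_five ⟨0, ht⟩ hu (hG _ _)).map
    (Embedding.refl.boxProdMap (Embedding.pathGraphCastLE hn))

end SimpleGraph

theorem immersion_boxProd_path_ge {V : Type*} [Fintype V] (G : SimpleGraph V) (t : ℕ)
    (hconn : G.Connected) (him : immersionNumber G = t)
    (hne : IsEmpty (G ≃g (⊤ : SimpleGraph (Fin t))))
    (n : ℕ) (hn : 5 ≤ n) :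
    t + 2 ≤ immersionNumber (G.boxProd (SimpleGraph.pathGraph n)) := by
  have hG : HasCliqueImmersion G t := him ▸ hasCliqueImmersion_immersionNumber G
  have ht : 0 < t := him ▸ (hasCliqueImmersion_one hconn.nonempty.some).le_immersionNumber
  have htV : t < Fintype.card V := by
    refine hG.le_card.lt_of_ne fun htV => hne.false ?_
    have hG' : HasCliqueImmersion G (Fintype.card V) := htV ▸ hG
    rw [hG'.eq_top]
    exact Iso.completeGraph (Fintype.equivFinOfCardEq htV.symm)
  exact (hG.boxProd_pathGraph hconn.preconnected ht htV hn).le_immersionNumber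
end

section
/- For every d ≥ 1, the immersion number of the d-dimensional hypercube Q_d equals d + 1. -/
set_option linter.unusedVariables false

open SimpleGraph

namespace HQAux

variable {d : ℕ}

abbrev Q (d : ℕ) := boxPow (⊤ : SimpleGraph Bool) d

def zeroV (d : ℕ) : Fin d → Bool := fun _ => false
def eV (a : Fin d) : Fin d → Bool := fun j => decide (j = a)
def fV (a b : Fin d) : Fin d → Bool := fun j => decide (j = a) || decide (j = b)

lemma eV_ne_zero (a : Fin d) : eV a ≠ zeroV d := fun h => by
  have := congrFun h a; simp [eV, zeroV] at this

lemma eV_inj {a b : Fin d} (h : eV a = eV b) : a = b := by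
  have := congrFun h a; simpa [eV] using this

lemma fV_ne_zero {a b : Fin d} : fV a b ≠ zeroV d := fun h => by
  have := congrFun h a; simp [fV, zeroV] at this

lemma fV_ne_eV {a b c : Fin d} (hab : a ≠ b) : fV a b ≠ eV c := fun h => by
  have ha := congrFun h a; have hb := congrFun h b
  simp [fV, eV] at ha hb
  exact hab (ha.trans hb.symm)

lemma fV_eq_fV {a b c e : Fin d} (hab : a ≠ b) (hce : c ≠ e) (h : fV a b = fV c e) :
    (a = c ∧ b = e) ∨ (a = e ∧ b = c) := by
  have ha := congrFun h a; have hb := congrFun h b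
  simp [fV] at ha hb
  rcases ha with h1 | h1 <;> rcases hb with h2 | h2
  · exact absurd (h1.trans h2.symm) hab
  · exact Or.inl ⟨h1, h2⟩
  · exact Or.inr ⟨h1, h2⟩
  · exact absurd (h1.trans h2.symm) hab

lemma adj_zero_e (a : Fin d) : (Q d).Adj (zeroV d) (eV a) :=
  ⟨a, by simp [zeroV, eV], fun j hj => by simp [zeroV, eV, hj]⟩

lemma adj_e_f {a b : Fin d} (h : a ≠ b) : (Q d).Adj (eV a) (fV a b) :=
  ⟨b, by simp [eV, fV, h, Ne.symm h], fun j hj => by simp [eV, fV, hj]⟩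

lemma adj_f_e {a b : Fin d} (h : a ≠ b) : (Q d).Adj (fV a b) (eV b) :=
  ⟨a, by simp [eV, fV, h, Ne.symm h], fun j hj => by simp [eV, fV, hj]⟩

def W0 (a : Fin d) : (Q d).Walk (zeroV d) (eV a) := SimpleGraph.Walk.cons (adj_zero_e a) SimpleGraph.Walk.nil

def W1 {a b : Fin d} (h : a ≠ b) : (Q d).Walk (eV a) (eV b) :=
  SimpleGraph.Walk.cons (adj_e_f h) (SimpleGraph.Walk.cons (adj_f_e h) SimpleGraph.Walk.nil)

lemma W0_isPath (a : Fin d) : (W0 a).IsPath := by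
  simp only [W0, SimpleGraph.Walk.cons_isPath_iff]
  refine ⟨SimpleGraph.Walk.IsPath.nil, ?_⟩
  simp only [SimpleGraph.Walk.support_nil, List.mem_singleton]
  exact fun h => eV_ne_zero a h.symm

lemma W1_isPath {a b : Fin d} (h : a ≠ b) : (W1 h).IsPath := by
  rw [W1, SimpleGraph.Walk.cons_isPath_iff]
  constructor
  · rw [SimpleGraph.Walk.cons_isPath_iff]
    refine ⟨SimpleGraph.Walk.IsPath.nil, ?_⟩
    simp only [SimpleGraph.Walk.support_nil, List.mem_singleton]
    exact fun hf => fV_ne_eV h hf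
  · simp only [SimpleGraph.Walk.support_cons, SimpleGraph.Walk.support_nil, List.mem_cons, List.not_mem_nil, or_false,
      List.mem_singleton]
    rintro (he | he)
    · exact fV_ne_eV h he.symm
    · exact h (eV_inj he)

lemma W0_edges (a : Fin d) : (W0 a).edges = [s(zeroV d, eV a)] := rfl

lemma W1_edges {a b : Fin d} (h : a ≠ b) :
    (W1 h).edges = [s(eV a, fV a b), s(fV a b, eV b)] := rfl

lemma W0_disjoint_W0 {a b : Fin d} (h : a ≠ b) :
    List.Disjoint (W0 a).edges (W0 b).edges := by
  rw [W0_edges, W0_edges]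
  intro s hs1 hs2
  simp only [List.mem_singleton] at hs1 hs2
  subst hs1
  rcases Sym2.eq_iff.mp hs2 with ⟨-, h2⟩ | ⟨h1, -⟩
  · exact h (eV_inj h2)
  · exact eV_ne_zero b h1.symm

lemma W0_disjoint_W1 {a c e : Fin d} (hce : c ≠ e) :
    List.Disjoint (W0 a).edges (W1 hce).edges := by
  rw [W0_edges, W1_edges]
  intro s hs1 hs2
  simp only [List.mem_singleton] at hs1
  subst hs1
  simp only [List.mem_cons, List.not_mem_nil, or_false] at hs2
  rcases hs2 with he | he <;> rcases Sym2.eq_iff.mp he with ⟨h1, h2⟩ | ⟨h1, h2⟩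
  · exact eV_ne_zero c h1.symm
  · exact fV_ne_zero h1.symm
  · exact fV_ne_zero h1.symm
  · exact eV_ne_zero e h1.symm

lemma W1_disjoint_W1 {x y z w : Fin d} (hxy : x < y) (hzw : z < w)
    (hne : ¬(x = z ∧ y = w)) :
    List.Disjoint (W1 hxy.ne).edges (W1 hzw.ne).edges := by
  rw [W1_edges, W1_edges]
  intro s hs1 hs2
  simp only [List.mem_cons, List.not_mem_nil, or_false] at hs1 hs2
  have hxy' := hxy.ne
  have hzw' := hzw.ne
  rcases hs1 with rfl | rfl <;> rcases hs2 with he | he <;>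
    rcases Sym2.eq_iff.mp he with ⟨h1, h2⟩ | ⟨h1, h2⟩
  -- s(eVx,fVxy) = s(eVz,fVzw), aligned
  · rcases fV_eq_fV hxy' hzw' h2 with ⟨ha, hb⟩ | ⟨ha, hb⟩
    · exact hne ⟨ha, hb⟩
    · exact hxy' ((eV_inj h1).trans hb.symm)
  -- eVx = fVzw
  · exact fV_ne_eV hxy' h2
  -- s(eVx,fVxy) = s(fVzw,eVw): h1 : eVx = fVzw (aligned) impossible
  · exact fV_ne_eV hzw' h1.symm
  -- crossed: h1 : eVx = eVw, h2 : fVxy = fVzw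
  · rcases fV_eq_fV hxy' hzw' h2 with ⟨ha, hb⟩ | ⟨ha, hb⟩
    · subst ha; subst hb; exact hxy' (eV_inj h1)
    · subst ha; subst hb; exact absurd hzw (lt_asymm hxy)
  -- s(fVxy,eVy) = s(eVz,fVzw): aligned h1 : fVxy = eVz impossible
  · exact fV_ne_eV hxy' h1
  -- crossed: h1 : fVxy = fVzw, h2 : eVy = eVz
  · rcases fV_eq_fV hxy' hzw' h1 with ⟨ha, hb⟩ | ⟨ha, hb⟩
    · subst ha; subst hb; exact hzw' (eV_inj h2.symm)
    · subst ha; subst hb; exact absurd hzw (lt_asymm hxy)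
  -- s(fVxy,eVy) = s(fVzw,eVw): aligned h1 : fVxy = fVzw, h2 : eVy = eVw
  · rcases fV_eq_fV hxy' hzw' h1 with ⟨ha, hb⟩ | ⟨ha, hb⟩
    · exact hne ⟨ha, hb⟩
    · subst ha; subst hb; exact hxy' (eV_inj h2.symm)
  -- crossed: h1 : fVxy = eVw
  · exact fV_ne_eV hxy' h1

def phi (d : ℕ) : Fin (d + 1) → (Fin d → Bool)
  | ⟨0, _⟩ => zeroV d
  | ⟨a + 1, h⟩ => eV ⟨a, by omega⟩

def P (d : ℕ) : ∀ i j : Fin (d + 1), (Q d).Walk (phi d i) (phi d j)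
  | ⟨0, _⟩, ⟨0, _⟩ => SimpleGraph.Walk.nil
  | ⟨0, _⟩, ⟨b + 1, hb⟩ => W0 ⟨b, by omega⟩
  | ⟨a + 1, ha⟩, ⟨0, _⟩ => (W0 ⟨a, by omega⟩).reverse
  | ⟨a + 1, ha⟩, ⟨b + 1, hb⟩ =>
      if h : (⟨a, by omega⟩ : Fin d) = ⟨b, by omega⟩ then
        ((W0 ⟨a, by omega⟩).reverse.append (W0 ⟨b, by omega⟩))
      else W1 h

lemma phi_inj : Function.Injective (phi d) := by
  rintro ⟨i, hi⟩ ⟨j, hj⟩ h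
  match i, j with
  | 0, 0 => rfl
  | 0, b + 1 => exact absurd h.symm (eV_ne_zero _)
  | a + 1, 0 => exact absurd h (eV_ne_zero _)
  | a + 1, b + 1 =>
      have := eV_inj h
      simp only [Fin.mk.injEq] at this ⊢
      omega

lemma P_zero_succ {h0 : 0 < d + 1} {b : ℕ} (hb : b + 1 < d + 1) :
    P d ⟨0, h0⟩ ⟨b + 1, hb⟩ = W0 ⟨b, by omega⟩ := rfl

lemma P_succ_succ {a b : ℕ} (ha : a + 1 < d + 1) (hb : b + 1 < d + 1)
    (hne : (⟨a, by omega⟩ : Fin d) ≠ ⟨b, by omega⟩) :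
    P d ⟨a + 1, ha⟩ ⟨b + 1, hb⟩ = W1 hne := by
  simp only [P]; exact dif_neg hne

lemma lower (d : ℕ) : HasCliqueImmersion (Q d) (d + 1) := by
  refine ⟨phi d, phi_inj, P d, ?_, ?_⟩
  · rintro ⟨i, hi⟩ ⟨j, hj⟩ hij
    rw [Fin.mk_lt_mk] at hij
    match i, j, hij with
    | 0, b + 1, _ => rw [P_zero_succ]; exact W0_isPath _
    | a + 1, b + 1, hij =>
        have hne : (⟨a, by omega⟩ : Fin d) ≠ ⟨b, by omega⟩ := by
          simp only [ne_eq, Fin.mk.injEq]; omega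
        rw [P_succ_succ _ _ hne]; exact W1_isPath hne
  · rintro ⟨i, hi⟩ ⟨j, hj⟩ ⟨k, hk⟩ ⟨l, hl⟩ hij hkl hne
    rw [Fin.mk_lt_mk] at hij hkl
    have hne' : ¬(i = k ∧ j = l) := by
      intro ⟨h1, h2⟩; exact hne (by simp [Prod.ext_iff, Fin.ext_iff, h1, h2])
    match i, j, k, l, hij, hkl, hne' with
    | 0, b + 1, 0, e + 1, _, _, hne' =>
        rw [P_zero_succ, P_zero_succ]
        exact W0_disjoint_W0 (by simp only [ne_eq, Fin.mk.injEq]; omega)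
    | 0, b + 1, c + 1, e + 1, _, hkl, _ =>
        have h2 : (⟨c, by omega⟩ : Fin d) ≠ ⟨e, by omega⟩ := by
          simp only [ne_eq, Fin.mk.injEq]; omega
        rw [P_zero_succ, P_succ_succ _ _ h2]
        exact W0_disjoint_W1 h2
    | a + 1, b + 1, 0, e + 1, hij, _, _ =>
        have h1 : (⟨a, by omega⟩ : Fin d) ≠ ⟨b, by omega⟩ := by
          simp only [ne_eq, Fin.mk.injEq]; omega
        rw [P_zero_succ, P_succ_succ _ _ h1]
        exact (W0_disjoint_W1 h1).symm
    | a + 1, b + 1, c + 1, e + 1, hij, hkl, hne' =>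
        have h1 : (⟨a, by omega⟩ : Fin d) < ⟨b, by omega⟩ := by
          rw [Fin.mk_lt_mk]; omega
        have h2 : (⟨c, by omega⟩ : Fin d) < ⟨e, by omega⟩ := by
          rw [Fin.mk_lt_mk]; omega
        rw [P_succ_succ _ _ h1.ne, P_succ_succ _ _ h2.ne]
        exact W1_disjoint_W1 h1 h2 (by simp only [Fin.mk.injEq]; omega)

lemma firstEdge_mem {V : Type*} {G : SimpleGraph V} {u w : V} (p : G.Walk u w)
    (hp : ¬ p.Nil) : s(u, p.getVert 1) ∈ p.edges := by
  cases p with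
  | nil => simp at hp
  | cons h q =>
      simp [SimpleGraph.Walk.getVert_cons_succ]

lemma upper (d t : ℕ) (hd : 1 ≤ d) (h : HasCliqueImmersion (Q d) t) : t ≤ d + 1 := by
  rcases Nat.eq_zero_or_pos t with rfl | ht
  · omega
  obtain ⟨φ, hinj, P, hpath, hdisj⟩ := h
  set z : Fin t := ⟨0, ht⟩ with hz
  have hnn : ∀ j : Fin t, z < j → ¬ (P z j).Nil := fun j hj =>
    SimpleGraph.Walk.not_nil_of_ne fun he => hj.ne (hinj he)
  have hadj : ∀ j : Fin t, z < j → (Q d).Adj (φ z) ((P z j).getVert 1) :=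
    fun j hj => SimpleGraph.Walk.adj_snd (hnn j hj)
  classical
  let ι : Fin t → Fin d := fun j =>
    if hj : z < j then (hadj j hj).choose else ⟨0, hd⟩
  have hvert : ∀ j : Fin t, (hj : z < j) → ∀ m : Fin d,
      (P z j).getVert 1 m = if m = ι j then !(φ z m) else φ z m := by
    intro j hj m
    have hspec := (hadj j hj).choose_spec
    simp only [ι, dif_pos hj]
    by_cases hm : m = (hadj j hj).choose
    · subst hm
      rw [if_pos rfl]
      have hne : φ z (hadj j hj).choose ≠ (P z j).getVert 1 (hadj j hj).choose := hspec.1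
      revert hne
      cases (φ z (hadj j hj).choose) <;> cases ((P z j).getVert 1 (hadj j hj).choose) <;> simp
    · rw [if_neg hm]
      exact (hspec.2 m hm).symm
  have hιinj : ∀ j k : Fin t, z < j → z < k → ι j = ι k → j = k := by
    intro j k hj hk hjk
    by_contra hnejk
    have hv : (P z j).getVert 1 = (P z k).getVert 1 := by
      funext m; rw [hvert j hj m, hvert k hk m, hjk]
    have hmem1 : s(φ z, (P z j).getVert 1) ∈ (P z j).edges := firstEdge_mem _ (hnn j hj)
    have hmem2 : s(φ z, (P z j).getVert 1) ∈ (P z k).edges := by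
      rw [hv]; exact firstEdge_mem _ (hnn k hk)
    exact hdisj z j z k hj hk (fun hp => hnejk (congrArg Prod.snd hp)) hmem1 hmem2
  have hcard : (Finset.univ.erase z).card ≤ Fintype.card (Fin d) := by
    have : Set.InjOn ι (Finset.univ.erase z) := by
      intro j hj k hk hjk
      rw [Finset.coe_erase, Set.mem_diff] at hj hk
      have hzj : z < j := by
        have hne0 : j.1 ≠ 0 := fun h0 => hj.2 (Fin.ext h0)
        exact Fin.lt_def.mpr (Nat.pos_of_ne_zero hne0)
      have hzk : z < k := by
        have hne0 : k.1 ≠ 0 := fun h0 => hk.2 (Fin.ext h0)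
        exact Fin.lt_def.mpr (Nat.pos_of_ne_zero hne0)
      exact hιinj j k hzj hzk hjk
    calc (Finset.univ.erase z).card ≤ Finset.univ.card :=
          Finset.card_le_card_of_injOn ι (fun _ _ => Finset.mem_univ _) this
      _ = Fintype.card (Fin d) := Finset.card_univ
  rw [Finset.card_erase_of_mem (Finset.mem_univ z), Finset.card_univ, Fintype.card_fin,
    Fintype.card_fin] at hcard
  omega

end HQAux

theorem immersion_hypercube (d : ℕ) (hd : 1 ≤ d) :
    immersionNumber (boxPow (⊤ : SimpleGraph Bool) d) = d + 1 := by
  have hmem : HasCliqueImmersion (boxPow (⊤ : SimpleGraph Bool) d) (d + 1) := HQAux.lower d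
  have hub : ∀ t ∈ {t | HasCliqueImmersion (boxPow (⊤ : SimpleGraph Bool) d) t}, t ≤ d + 1 :=
    fun t ht => HQAux.upper d t hd ht
  refine le_antisymm (csSup_le ⟨d + 1, hmem⟩ hub) (le_csSup ⟨d + 1, ?_⟩ hmem)
  intro t ht
  exact hub t ht
end

section
/- For every d ≥ 1 and n ≥ 1, the immersion number of the Hamming graph K_n^d (the Cartesian product of d copies of K_n) equals d(n − 1) + 1. -/
set_option linter.unusedVariables false
set_option maxHeartbeats 1000000

open SimpleGraph

/-! ### Auxiliary material -/

section Aux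

open SimpleGraph Walk

lemma list_disjoint_map {γ δ : Type*} {f : γ → δ} (hf : Function.Injective f)
    {l1 l2 : List γ} (h : List.Disjoint l1 l2) :
    List.Disjoint (l1.map f) (l2.map f) := by
  intro x hx1 hx2
  obtain ⟨c, hc, rfl⟩ := List.mem_map.mp hx1
  obtain ⟨c', hc', he⟩ := List.mem_map.mp hx2
  rw [hf he] at hc'
  exact h hc hc'

lemma imm_of_iso {α β : Type*} {G : SimpleGraph α} {H : SimpleGraph β} (e : G ≃g H) {t : ℕ}
    (h : HasCliqueImmersion G t) : HasCliqueImmersion H t := by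
  obtain ⟨φ, hφ, P, hp, hd⟩ := h
  refine ⟨fun i => e (φ i), fun i j hij => hφ (e.injective hij),
    fun i j => (P i j).map e.toHom, fun i j hij =>
      Walk.map_isPath_of_injective e.injective (hp i j hij),
    fun i j k l h1 h2 h3 => ?_⟩
  rw [Walk.edges_map, Walk.edges_map]
  exact list_disjoint_map (Sym2.map.injective e.injective) (hd i j k l h1 h2 h3)

section SymWalk

variable {α : Type*} {G : SimpleGraph α} {m : ℕ} (g : Fin m → α)
  (PG : ∀ i j : Fin m, G.Walk (g i) (g j))

/-- A symmetrized family of walks: `symWalk g PG i j` is nil for `i = j`, `PG i j` for `i < j`,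
and the reverse of `PG j i` for `j < i`. -/
def symWalk (i j : Fin m) : G.Walk (g i) (g j) :=
  if h : i = j then Walk.nil.copy rfl (congrArg g h)
  else if h2 : i < j then PG i j else (PG j i).reverse

lemma symWalk_isPath (hP : ∀ i j : Fin m, i < j → (PG i j).IsPath) (i j : Fin m) :
    (symWalk g PG i j).IsPath := by
  unfold symWalk
  split
  · simp
  · rename_i hij
    split
    · exact hP _ _ ‹_›
    · rename_i h2
      exact (hP j i (lt_of_le_of_ne (not_lt.mp h2) (Ne.symm hij))).reverse

lemma mem_symWalk_edges {i j : Fin m} {e : Sym2 α} (he : e ∈ (symWalk g PG i j).edges) :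
    (i < j ∧ e ∈ (PG i j).edges) ∨ (j < i ∧ e ∈ (PG j i).edges) := by
  unfold symWalk at he
  split at he
  · simp at he
  · rename_i hij
    split at he
    · exact Or.inl ⟨‹_›, he⟩
    · rename_i h2
      rw [Walk.edges_reverse, List.mem_reverse] at he
      exact Or.inr ⟨lt_of_le_of_ne (not_lt.mp h2) (Ne.symm hij), he⟩

end SymWalk

/-- The complete graph on `Fin n` has a `K_n`-immersion. -/
lemma complete_imm (n : ℕ) : HasCliqueImmersion (⊤ : SimpleGraph (Fin n)) n := by
  refine ⟨id, Function.injective_id,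
    fun i j => if h : i = j then Walk.nil.copy rfl (congrArg id h)
      else Walk.cons (by simpa using h) Walk.nil, ?_, ?_⟩
  · intro i j hij
    simp [dif_neg hij.ne, hij.ne]
  · intro i j k l hij hkl hne
    simp only [dif_neg hij.ne, dif_neg hkl.ne]
    intro e he1 he2
    simp only [Walk.edges_cons, Walk.edges_nil, List.mem_singleton] at he1 he2
    subst he1
    rw [Sym2.eq_iff] at he2
    rcases he2 with ⟨rfl, rfl⟩ | ⟨rfl, rfl⟩
    · exact hne rfl
    · exact absurd (hij.trans hkl) (lt_irrefl _)

/-- The zeroth Cartesian power (a single vertex) has a `K_1`-immersion. -/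
lemma boxPow_zero_imm {α : Type*} (G : SimpleGraph α) : HasCliqueImmersion (boxPow G 0) 1 := by
  refine ⟨fun _ => Fin.elim0, fun a b _ => Subsingleton.elim a b,
    fun i j => Walk.nil, ?_, ?_⟩
  · intro i j hij
    exact absurd (Subsingleton.elim i j) (ne_of_lt hij)
  · intro i j k l hij _ _
    exact absurd (Subsingleton.elim i j) (ne_of_lt hij)

/-- `boxPow G (d+1)` is isomorphic to `(boxPow G d) □ G`. -/
def boxPowSuccIso {α : Type*} (G : SimpleGraph α) (d : ℕ) :
    boxPow G (d + 1) ≃g (boxPow G d).boxProd G where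
  toFun x := (x ∘ Fin.castSucc, x (Fin.last d))
  invFun p := Fin.snoc p.1 p.2
  left_inv x := by
    funext i
    refine Fin.lastCases ?_ (fun i => ?_) i
    · simp
    · simp
  right_inv p := by
    refine Prod.ext ?_ ?_
    · funext i; simp
    · simp
  map_rel_iff' := by
    intro x y
    constructor
    · rintro (⟨⟨i, hadj, hrest⟩, hlast⟩ | ⟨hadj, hcast⟩)
      · refine ⟨Fin.castSucc i, hadj, fun j hj => ?_⟩
        refine Fin.lastCases ?_ (fun j' => fun hj' => ?_) j hj
        · exact fun _ => hlast
        · exact hrest j' (fun hc => hj' (by rw [hc]))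
      · refine ⟨Fin.last d, hadj, fun j hj => ?_⟩
        refine Fin.lastCases ?_ (fun j' => fun _ => ?_) j hj
        · intro hj; exact absurd rfl hj
        · exact congrFun hcast j'
    · rintro ⟨i, hadj, hrest⟩
      refine Fin.lastCases ?_ (fun i' => ?_) i hadj hrest
      · intro hadj hrest
        refine Or.inr ⟨hadj, funext fun j => hrest (Fin.castSucc j) (Fin.castSucc_lt_last j).ne⟩
      · intro hadj hrest
        refine Or.inl ⟨⟨i', hadj, fun j hj => hrest (Fin.castSucc j)
          (fun hc => hj (Fin.castSucc_injective _ hc))⟩,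
          hrest (Fin.last d) (Fin.castSucc_lt_last i').ne'⟩

/-- Homomorphism `H →g G □ H` fixing the first coordinate. -/
@[reducible]
def colHom {α β : Type*} (G : SimpleGraph α) (H : SimpleGraph β) (c : α) : H →g G.boxProd H :=
  ⟨fun x => (c, x), fun hxy => Or.inr ⟨hxy, rfl⟩⟩

/-- Homomorphism `G →g G □ H` fixing the second coordinate. -/
@[reducible]
def rowHom {α β : Type*} (G : SimpleGraph α) (H : SimpleGraph β) (r : β) : G →g G.boxProd H :=
  ⟨fun x => (x, r), fun hxy => Or.inl ⟨hxy, rfl⟩⟩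

@[simp] lemma colHom_apply {α β : Type*} (G : SimpleGraph α) (H : SimpleGraph β) (c : α) (x : β) :
    colHom G H c x = (c, x) := rfl

@[simp] lemma rowHom_apply {α β : Type*} (G : SimpleGraph α) (H : SimpleGraph β) (r : β) (x : α) :
    rowHom G H r x = (x, r) := rfl

lemma colHom_injective {α β : Type*} (G : SimpleGraph α) (H : SimpleGraph β) (c : α) :
    Function.Injective (colHom G H c) := fun x y hxy => congrArg Prod.snd hxy

lemma rowHom_injective {α β : Type*} (G : SimpleGraph α) (H : SimpleGraph β) (r : β) :
    Function.Injective (rowHom G H r) := fun x y hxy => congrArg Prod.fst hxy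

lemma col_col_ne {α β : Type*} {G : SimpleGraph α} {H : SimpleGraph β} {c c' : α}
    (hcc : c ≠ c') (e1 e2 : Sym2 β) :
    Sym2.map (colHom G H c) e1 ≠ Sym2.map (colHom G H c') e2 := by
  refine Sym2.inductionOn₂ e1 e2 (fun u v u' v' => ?_)
  simp only [Sym2.map_pair_eq, colHom_apply, rowHom_apply, ne_eq, Sym2.eq_iff, Prod.mk.injEq]
  rintro (⟨⟨h1, -⟩, -⟩ | ⟨⟨h1, -⟩, -⟩) <;> exact hcc h1

lemma row_row_ne {α β : Type*} {G : SimpleGraph α} {H : SimpleGraph β} {r r' : β}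
    (hrr : r ≠ r') (e1 e2 : Sym2 α) :
    Sym2.map (rowHom G H r) e1 ≠ Sym2.map (rowHom G H r') e2 := by
  refine Sym2.inductionOn₂ e1 e2 (fun u v u' v' => ?_)
  simp only [Sym2.map_pair_eq, colHom_apply, rowHom_apply, ne_eq, Sym2.eq_iff, Prod.mk.injEq]
  rintro (⟨⟨-, h1⟩, -⟩ | ⟨⟨-, h1⟩, -⟩) <;> exact hrr h1

lemma col_row_ne {α β : Type*} {G : SimpleGraph α} {H : SimpleGraph β} {c : α} {r : β}
    {e1 : Sym2 β} {e2 : Sym2 α} (h1 : ¬ e1.IsDiag) :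
    Sym2.map (colHom G H c) e1 ≠ Sym2.map (rowHom G H r) e2 := by
  revert h1
  refine Sym2.inductionOn₂ e1 e2 (fun u v u' v' => ?_)
  intro h1
  rw [Sym2.mk_isDiag_iff] at h1
  simp only [Sym2.map_pair_eq, colHom_apply, rowHom_apply, ne_eq, Sym2.eq_iff, Prod.mk.injEq]
  rintro (⟨⟨-, h2⟩, ⟨-, h3⟩⟩ | ⟨⟨-, h2⟩, ⟨-, h3⟩⟩) <;> exact h1 (h2.trans h3.symm)

/-- The key product lemma: clique immersions in factors combine in the box product. -/
lemma boxProd_imm {α β : Type*} {G : SimpleGraph α} {H : SimpleGraph β} {s t : ℕ}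
    (hG : HasCliqueImmersion G (s + 1)) (hH : HasCliqueImmersion H (t + 1)) :
    HasCliqueImmersion (G.boxProd H) (s + t + 1) := by
  obtain ⟨g, hg, PG, hPG, hDG⟩ := hG
  obtain ⟨h, hh, PH, hPH, hDH⟩ := hH
  set a : Fin (s + t + 1) → Fin (s + 1) := fun k =>
    if hk : (k : ℕ) < s + 1 then ⟨k, hk⟩ else 0 with ha
  set b : Fin (s + t + 1) → Fin (t + 1) := fun k =>
    if hk : (k : ℕ) < s + 1 then 0 else ⟨(k : ℕ) - s, by have := k.isLt; omega⟩ with hb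
  have hval : ∀ k : Fin (s + t + 1),
      ((k : ℕ) < s + 1 ∧ (a k : ℕ) = k ∧ (b k : ℕ) = 0) ∨
      (s + 1 ≤ (k : ℕ) ∧ (a k : ℕ) = 0 ∧ (b k : ℕ) = (k : ℕ) - s) := by
    intro k
    by_cases hk : (k : ℕ) < s + 1
    · left; refine ⟨hk, ?_, ?_⟩ <;> simp [ha, hb, hk, show (k : ℕ) ≤ s by omega] <;> omega
    · right; refine ⟨by omega, ?_, ?_⟩ <;> simp [ha, hb, hk, show ¬ (k : ℕ) ≤ s by omega] <;> omega
  have claimH : ∀ k l k' l' : Fin (s + t + 1), (k : ℕ) < l → (k' : ℕ) < l' →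
      ¬((k : ℕ) = k' ∧ (l : ℕ) = l') → (a k : ℕ) = (a k' : ℕ) →
      (b k : ℕ) ≠ (b l : ℕ) → (b k' : ℕ) ≠ (b l' : ℕ) →
      (((b k : ℕ) = (b k' : ℕ) ∧ (b l : ℕ) = (b l' : ℕ)) ∨
       ((b k : ℕ) = (b l' : ℕ) ∧ (b l : ℕ) = (b k' : ℕ))) → False := by
    intro k l k' l' h1 h2 h3 h4 h5 h6 h7
    have Hk := hval k; have Hl := hval l; have Hk' := hval k'; have Hl' := hval l'
    omega
  have claimG : ∀ k l k' l' : Fin (s + t + 1), (k : ℕ) < l → (k' : ℕ) < l' →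
      ¬((k : ℕ) = k' ∧ (l : ℕ) = l') → (b l : ℕ) = (b l' : ℕ) →
      (a k : ℕ) ≠ (a l : ℕ) → (a k' : ℕ) ≠ (a l' : ℕ) →
      (((a k : ℕ) = (a k' : ℕ) ∧ (a l : ℕ) = (a l' : ℕ)) ∨
       ((a k : ℕ) = (a l' : ℕ) ∧ (a l : ℕ) = (a k' : ℕ))) → False := by
    intro k l k' l' h1 h2 h3 h4 h5 h6 h7
    have Hk := hval k; have Hl := hval l; have Hk' := hval k'; have Hl' := hval l'
    omega
  have hφinj : Function.Injective (fun k : Fin (s + t + 1) => ((g (a k), h (b k)) : α × β)) := by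
    intro k l he
    simp only [Prod.mk.injEq] at he
    have h1 : (a k : ℕ) = (a l : ℕ) := congrArg Fin.val (hg he.1)
    have h2 : (b k : ℕ) = (b l : ℕ) := congrArg Fin.val (hh he.2)
    have Hk := hval k; have Hl := hval l
    exact Fin.ext (by omega)
  refine ⟨fun k => (g (a k), h (b k)), hφinj, fun k l =>
    ((symWalk h PH (b k) (b l)).map (colHom G H (g (a k)))).append
    ((symWalk g PG (a k) (a l)).map (rowHom G H (h (b l)))), ?_, ?_⟩
  · -- paths
    intro k l hkl
    dsimp only
    rw [Walk.isPath_def, Walk.support_append, Walk.support_map, Walk.support_map]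
    have hGP := symWalk_isPath g PG hPG (a k) (a l)
    have hHP := symWalk_isPath h PH hPH (b k) (b l)
    have hcons := Walk.support_eq_cons (symWalk g PG (a k) (a l))
    have hnodupG := hGP.support_nodup
    rw [hcons, List.nodup_cons] at hnodupG
    rw [hcons, List.map_cons, List.tail_cons]
    refine List.Nodup.append
      (List.Nodup.map (fun x y hxy => ?_) hHP.support_nodup)
      (List.Nodup.map (fun x y hxy => ?_) hnodupG.2) ?_
    · exact congrArg Prod.snd hxy
    · exact congrArg Prod.fst hxy
    · intro x hx1 hx2
      obtain ⟨u, hu, rfl⟩ := List.mem_map.mp hx1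
      obtain ⟨w, hw, hwx⟩ := List.mem_map.mp hx2
      have hw1 : w = g (a k) := congrArg Prod.fst hwx
      exact hnodupG.1 (hw1 ▸ hw)
  · -- edge-disjointness
    intro k l k' l' hkl hk'l' hne
    have vkl : (k : ℕ) < l := hkl
    have vkl' : (k' : ℕ) < l' := hk'l'
    have hne' : ¬((k : ℕ) = (k' : ℕ) ∧ (l : ℕ) = (l' : ℕ)) := by
      rintro ⟨h1, h2⟩
      exact hne (by rw [Prod.mk.injEq]; exact ⟨Fin.ext h1, Fin.ext h2⟩)
    dsimp only
    rw [Walk.edges_append, Walk.edges_append, Walk.edges_map, Walk.edges_map,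
      Walk.edges_map, Walk.edges_map]
    intro e he he'
    rcases List.mem_append.mp he with h1 | h1 <;> rcases List.mem_append.mp he' with h2 | h2
    · -- col vs col
      obtain ⟨e1, he1, rfl⟩ := List.mem_map.mp h1
      obtain ⟨e2, he2, heq⟩ := List.mem_map.mp h2
      by_cases hc : a k = a k'
      · rw [← hc] at heq
        have he12 : e2 = e1 := Sym2.map.injective (colHom_injective G H (g (a k))) heq
        rw [he12] at he2
        have hac : (a k : ℕ) = (a k' : ℕ) := congrArg Fin.val hc
        rcases mem_symWalk_edges h PH he1 with ⟨hlt1, hm1⟩ | ⟨hlt1, hm1⟩ <;>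
          rcases mem_symWalk_edges h PH he2 with ⟨hlt2, hm2⟩ | ⟨hlt2, hm2⟩
        · exact hDH (b k) (b l) (b k') (b l') hlt1 hlt2 (fun hpq =>
            claimH k l k' l' vkl vkl' hne' hac
              (Nat.ne_of_lt (Fin.lt_def.mp hlt1)) (Nat.ne_of_lt (Fin.lt_def.mp hlt2))
              (Or.inl ⟨congrArg Fin.val (congrArg Prod.fst hpq),
                congrArg Fin.val (congrArg Prod.snd hpq)⟩)) hm1 hm2
        · exact hDH (b k) (b l) (b l') (b k') hlt1 hlt2 (fun hpq =>
            claimH k l k' l' vkl vkl' hne' hac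
              (Nat.ne_of_lt (Fin.lt_def.mp hlt1)) (Ne.symm (Nat.ne_of_lt (Fin.lt_def.mp hlt2)))
              (Or.inr ⟨congrArg Fin.val (congrArg Prod.fst hpq),
                congrArg Fin.val (congrArg Prod.snd hpq)⟩)) hm1 hm2
        · exact hDH (b l) (b k) (b k') (b l') hlt1 hlt2 (fun hpq =>
            claimH k l k' l' vkl vkl' hne' hac
              (Ne.symm (Nat.ne_of_lt (Fin.lt_def.mp hlt1))) (Nat.ne_of_lt (Fin.lt_def.mp hlt2))
              (Or.inr ⟨congrArg Fin.val (congrArg Prod.snd hpq),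
                congrArg Fin.val (congrArg Prod.fst hpq)⟩)) hm1 hm2
        · exact hDH (b l) (b k) (b l') (b k') hlt1 hlt2 (fun hpq =>
            claimH k l k' l' vkl vkl' hne' hac
              (Ne.symm (Nat.ne_of_lt (Fin.lt_def.mp hlt1)))
              (Ne.symm (Nat.ne_of_lt (Fin.lt_def.mp hlt2)))
              (Or.inl ⟨congrArg Fin.val (congrArg Prod.snd hpq),
                congrArg Fin.val (congrArg Prod.fst hpq)⟩)) hm1 hm2
      · exact col_col_ne (fun hgc => hc (hg hgc)) e1 e2 heq.symm
    · -- col vs row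
      obtain ⟨e1, he1, rfl⟩ := List.mem_map.mp h1
      obtain ⟨e2, he2, heq⟩ := List.mem_map.mp h2
      have hdiag : ¬ e1.IsDiag :=
        H.not_isDiag_of_mem_edgeSet ((symWalk h PH (b k) (b l)).edges_subset_edgeSet he1)
      exact col_row_ne hdiag heq.symm
    · -- row vs col
      obtain ⟨e1, he1, rfl⟩ := List.mem_map.mp h1
      obtain ⟨e2, he2, heq⟩ := List.mem_map.mp h2
      have hdiag : ¬ e2.IsDiag :=
        H.not_isDiag_of_mem_edgeSet ((symWalk h PH (b k') (b l')).edges_subset_edgeSet he2)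
      exact col_row_ne hdiag heq
    · -- row vs row
      obtain ⟨e1, he1, rfl⟩ := List.mem_map.mp h1
      obtain ⟨e2, he2, heq⟩ := List.mem_map.mp h2
      by_cases hr : b l = b l'
      · rw [← hr] at heq
        have he12 : e2 = e1 := Sym2.map.injective (rowHom_injective G H (h (b l))) heq
        rw [he12] at he2
        have hbc : (b l : ℕ) = (b l' : ℕ) := congrArg Fin.val hr
        rcases mem_symWalk_edges g PG he1 with ⟨hlt1, hm1⟩ | ⟨hlt1, hm1⟩ <;>
          rcases mem_symWalk_edges g PG he2 with ⟨hlt2, hm2⟩ | ⟨hlt2, hm2⟩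
        · exact hDG (a k) (a l) (a k') (a l') hlt1 hlt2 (fun hpq =>
            claimG k l k' l' vkl vkl' hne' hbc
              (Nat.ne_of_lt (Fin.lt_def.mp hlt1)) (Nat.ne_of_lt (Fin.lt_def.mp hlt2))
              (Or.inl ⟨congrArg Fin.val (congrArg Prod.fst hpq),
                congrArg Fin.val (congrArg Prod.snd hpq)⟩)) hm1 hm2
        · exact hDG (a k) (a l) (a l') (a k') hlt1 hlt2 (fun hpq =>
            claimG k l k' l' vkl vkl' hne' hbc
              (Nat.ne_of_lt (Fin.lt_def.mp hlt1)) (Ne.symm (Nat.ne_of_lt (Fin.lt_def.mp hlt2)))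
              (Or.inr ⟨congrArg Fin.val (congrArg Prod.fst hpq),
                congrArg Fin.val (congrArg Prod.snd hpq)⟩)) hm1 hm2
        · exact hDG (a l) (a k) (a k') (a l') hlt1 hlt2 (fun hpq =>
            claimG k l k' l' vkl vkl' hne' hbc
              (Ne.symm (Nat.ne_of_lt (Fin.lt_def.mp hlt1))) (Nat.ne_of_lt (Fin.lt_def.mp hlt2))
              (Or.inr ⟨congrArg Fin.val (congrArg Prod.snd hpq),
                congrArg Fin.val (congrArg Prod.fst hpq)⟩)) hm1 hm2
        · exact hDG (a l) (a k) (a l') (a k') hlt1 hlt2 (fun hpq =>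
            claimG k l k' l' vkl vkl' hne' hbc
              (Ne.symm (Nat.ne_of_lt (Fin.lt_def.mp hlt1)))
              (Ne.symm (Nat.ne_of_lt (Fin.lt_def.mp hlt2)))
              (Or.inl ⟨congrArg Fin.val (congrArg Prod.snd hpq),
                congrArg Fin.val (congrArg Prod.fst hpq)⟩)) hm1 hm2
      · exact row_row_ne (fun hhc => hr (hh hhc)) e1 e2 heq.symm

lemma exists_first_edge {V : Type*} {G : SimpleGraph V} {u v : V} (p : G.Walk u v)
    (huv : u ≠ v) : ∃ w, G.Adj u w ∧ s(u, w) ∈ p.edges := by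
  cases p with
  | nil => exact absurd rfl huv
  | cons h q => exact ⟨_, h, by simp⟩

/-- Upper bound: no clique immersion can exceed the max degree plus one. -/
lemma hamming_upper (d n t : ℕ)
    (h : HasCliqueImmersion (boxPow (⊤ : SimpleGraph (Fin n)) d) t) :
    t ≤ d * (n - 1) + 1 := by
  match t with
  | 0 => omega
  | (t' + 1) =>
  suffices ht' : t' ≤ d * (n - 1) by omega
  obtain ⟨φ, hφ, P, hpath, hdisj⟩ := h
  have key : ∀ j : {j : Fin (t' + 1) // 0 < j},
      ∃ v, (boxPow (⊤ : SimpleGraph (Fin n)) d).Adj (φ 0) v ∧ s(φ 0, v) ∈ (P 0 j.1).edges := by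
    rintro ⟨j, hj⟩
    have hne : φ 0 ≠ φ j := by
      intro he
      rw [← hφ he] at hj
      exact lt_irrefl _ hj
    exact exists_first_edge (P 0 j) hne
  choose v hadj hedge using key
  have key2 : ∀ j : {j : Fin (t' + 1) // 0 < j},
      ∃ i : Fin d, (v j) i ≠ φ 0 i ∧ ∀ m, m ≠ i → φ 0 m = (v j) m := by
    intro j
    obtain ⟨i, hi, hrest⟩ := hadj j
    exact ⟨i, ((top_adj _ _).mp hi).symm, hrest⟩
  choose I hI1 hI2 using key2
  have hFinj : Function.Injective
      (fun j : {j : Fin (t' + 1) // 0 < j} =>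
        (⟨(I j, v j (I j)), hI1 j⟩ : {p : Fin d × Fin n // p.2 ≠ φ 0 p.1})) := by
    intro j j' hF
    have h1 : I j = I j' := congrArg (fun p => p.1.1) hF
    have h2 : v j (I j) = v j' (I j') := congrArg (fun p => p.1.2) hF
    have hv : v j = v j' := by
      funext m
      by_cases hm : m = I j
      · rw [hm, h2, h1]
      · rw [← hI2 j m hm, ← hI2 j' m (fun hc => hm (hc.trans h1.symm))]
    by_contra hjj
    have hne : j.1 ≠ j'.1 := fun hc => hjj (Subtype.ext hc)
    have hdis := hdisj 0 j.1 0 j'.1 j.2 j'.2 (by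
      intro hc
      exact hne (congrArg Prod.snd hc))
    exact hdis (hedge j) (hv ▸ hedge j')
  have hcard := Fintype.card_le_of_injective _ hFinj
  have hc1 : Fintype.card {j : Fin (t' + 1) // 0 < j} = t' := by
    have e2 : {j : Fin (t' + 1) // 0 < j} ≃ {j : Fin (t' + 1) // ¬ (j = 0)} :=
      Equiv.subtypeEquivRight (by intro j; simp [Fin.pos_iff_ne_zero])
    rw [Fintype.card_congr e2, Fintype.card_subtype_compl, Fintype.card_subtype_eq]
    simp
  have hc2 : Fintype.card {p : Fin d × Fin n // p.2 ≠ φ 0 p.1} = d * n - d := by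
    have e3 : Fin d ≃ {p : Fin d × Fin n // p.2 = φ 0 p.1} :=
      { toFun := fun i => ⟨(i, φ 0 i), rfl⟩
        invFun := fun p => p.1.1
        left_inv := fun i => rfl
        right_inv := fun p => by
          refine Subtype.ext (Prod.ext rfl ?_)
          exact p.2.symm }
    have : Fintype.card {p : Fin d × Fin n // ¬ (p.2 = φ 0 p.1)} = d * n - d := by
      rw [Fintype.card_subtype_compl, ← Fintype.card_congr e3]
      simp
    exact this
  rw [hc1, hc2] at hcard
  have : d * (n - 1) = d * n - d := by
    cases n with
    | zero => simp
    | succ m => simp [Nat.mul_succ]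
  omega

lemma hamming_lower (n : ℕ) (hn : 1 ≤ n) (d : ℕ) :
    HasCliqueImmersion (boxPow (⊤ : SimpleGraph (Fin n)) d) (d * (n - 1) + 1) := by
  induction d with
  | zero => simpa using boxPow_zero_imm (⊤ : SimpleGraph (Fin n))
  | succ d ih =>
    have hK : HasCliqueImmersion (⊤ : SimpleGraph (Fin n)) ((n - 1) + 1) := by
      have h := complete_imm n
      rwa [Nat.sub_add_cancel hn]
    have h2 := boxProd_imm (s := d * (n - 1)) (t := n - 1) ih hK
    have h3 := imm_of_iso (boxPowSuccIso (⊤ : SimpleGraph (Fin n)) d).symm h2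
    have harith : (d + 1) * (n - 1) + 1 = d * (n - 1) + (n - 1) + 1 := by ring
    rwa [harith]

end Aux

theorem immersion_hamming (d n : ℕ) (hd : 1 ≤ d) (hn : 1 ≤ n) :
    immersionNumber (boxPow (⊤ : SimpleGraph (Fin n)) d) = d * (n - 1) + 1 := by
  have hmem : (d * (n - 1) + 1) ∈ {t | HasCliqueImmersion (boxPow (⊤ : SimpleGraph (Fin n)) d) t} :=
    hamming_lower n hn d
  have hub : ∀ t ∈ {t | HasCliqueImmersion (boxPow (⊤ : SimpleGraph (Fin n)) d) t},
      t ≤ d * (n - 1) + 1 := fun t ht => hamming_upper d n t ht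
  exact le_antisymm (csSup_le ⟨_, hmem⟩ hub) (le_csSup ⟨_, hub⟩ hmem)
end
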